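/- arXiv:1205.2117 — 8 statements merged into one kernel-verified Lean document; each statement's English description precedes it below -/
import Mathlib

section
/- Let M be a commutative monoid with a weak decomposition order ≤ in which every element has at least one decomposition into indecomposables. If x, y, z ∈ M are such that x·y has a unique decomposition and x·y < x·z (strictly), then y < z (strictly). -/
/-- Indecomposable element of a commutative monoid. -/
def Indec {M : Type*} [CommMonoid M] (p : M) : Prop :=
  p ≠ 1 ∧ ∀ x y : M, p = x * y → x = 1 ∨ y = 1

/-- A decomposition of m: a finite multiset of indecomposables with product m. -/
def IsDecomp {M : Type*} [CommMonoid M] (d : Multiset M) (m : M) : Prop :=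
  (∀ p ∈ d, Indec p) ∧ d.prod = m

section Aux
variable {M : Type*} [CommMonoid M] [PartialOrder M]

/-- absorption: if w*c ≤ w then c = 1. -/
lemma aux_absorb
    (hcomp : ∀ x y z : M, x ≤ y → x * z ≤ y * z)
    (hbot : ∀ x : M, (1 : M) ≤ x)
    (harch : ∀ x y : M, (∀ n : ℕ, x ^ n ≤ y) → x = 1)
    {w c : M} (h : w * c ≤ w) : c = 1 := by
  have key : ∀ n : ℕ, w * c ^ n ≤ w := by
    intro n
    induction n with
    | zero => simpa using le_refl w
    | succ n ih =>
      calc w * c ^ (n+1) = (w * c ^ n) * c := by rw [pow_succ, mul_assoc]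
        _ ≤ w * c := hcomp _ _ _ ih
        _ ≤ w := h
  refine harch c w (fun n => ?_)
  calc c ^ n = 1 * c ^ n := (one_mul _).symm
    _ ≤ w * c ^ n := hcomp _ _ _ (hbot w)
    _ ≤ w := key n

/-- a multiset of indecomposables with product 1 is empty. -/
lemma aux_prod_one
    (hcomp : ∀ x y z : M, x ≤ y → x * z ≤ y * z)
    (hbot : ∀ x : M, (1 : M) ≤ x)
    {s : Multiset M} (hs : ∀ p ∈ s, Indec p) (h : s.prod = 1) : s = 0 := by
  by_contra hne
  obtain ⟨q, hq⟩ := Multiset.exists_mem_of_ne_zero hne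
  obtain ⟨t, rfl⟩ := Multiset.exists_cons_of_mem hq
  have hq1 : q ≤ 1 := by
    have : q * 1 ≤ q * t.prod := by
      rw [mul_comm q 1, mul_comm q t.prod]; exact hcomp _ _ _ (hbot _)
    rw [mul_one] at this
    rw [Multiset.prod_cons] at h
    exact h ▸ this
  exact (hs q (Multiset.mem_cons_self _ _)).1 (le_antisymm hq1 (hbot q))

/-- core: cancellation of an indecomposable. -/
lemma aux_core
    (hbot : ∀ x : M, (1 : M) ≤ x)
    (hcomp : ∀ x y z : M, x ≤ y → x * z ≤ y * z)
    (hpre : ∀ x y z : M, x ≤ y * z → ∃ y' z', x = y' * z' ∧ y' ≤ y ∧ z' ≤ z)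
    (harch : ∀ x y : M, (∀ n : ℕ, x ^ n ≤ y) → x = 1)
    (hex : ∀ m : M, ∃ d : Multiset M, IsDecomp d m)
    {p a b : M} (hp : Indec p)
    (huq : ∀ d d' : Multiset M, IsDecomp d (p * a) → IsDecomp d' (p * a) → d = d')
    (h : p * a ≤ p * b) : a ≤ b := by
  obtain ⟨u, v, hpa, hu, hv⟩ := hpre _ _ _ h
  obtain ⟨da, hda⟩ := hex a
  obtain ⟨du, hdu⟩ := hex u
  obtain ⟨dv, hdv⟩ := hex v
  have h1 : IsDecomp (p ::ₘ da) (p * a) := by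
    constructor
    · intro q hq
      rcases Multiset.mem_cons.mp hq with rfl | hq
      · exact hp
      · exact hda.1 q hq
    · rw [Multiset.prod_cons, hda.2]
  have h2 : IsDecomp (du + dv) (p * a) := by
    constructor
    · intro q hq
      rcases Multiset.mem_add.mp hq with hq | hq
      · exact hdu.1 q hq
      · exact hdv.1 q hq
    · rw [Multiset.prod_add, hdu.2, hdv.2, hpa]
  have heq : p ::ₘ da = du + dv := huq _ _ h1 h2
  have hpmem : p ∈ du + dv := heq ▸ Multiset.mem_cons_self p da
  rcases Multiset.mem_add.mp hpmem with hpu | hpv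
  · -- p ∈ du : then u = p, a = v
    obtain ⟨s, rfl⟩ := Multiset.exists_cons_of_mem hpu
    have hup : u = p * s.prod := by rw [← hdu.2, Multiset.prod_cons]
    have hsle : p * s.prod ≤ p := hup ▸ hu
    have hs1 : s.prod = 1 :=
      aux_absorb hcomp hbot harch hsle
    have hs0 : s = 0 := aux_prod_one hcomp hbot
      (fun q hq => hdu.1 q (Multiset.mem_cons_of_mem hq)) hs1
    subst hs0
    have : p ::ₘ da = p ::ₘ dv := by simpa using heq
    have hdav : da = dv := by
      exact (Multiset.cons_inj_right p).mp this
    have hav : a = v := by rw [← hda.2, hdav, hdv.2]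
    exact hav ▸ hv
  · -- p ∈ dv : a = u * t.prod ≤ p * t.prod = v ≤ b
    obtain ⟨t, rfl⟩ := Multiset.exists_cons_of_mem hpv
    have heq2 : p ::ₘ da = p ::ₘ (du + t) := by
      rw [heq, Multiset.add_cons]
    have hdat : da = du + t := (Multiset.cons_inj_right p).mp heq2
    have ha : a = u * t.prod := by
      rw [← hda.2, hdat, Multiset.prod_add, hdu.2]
    have hveq : v = p * t.prod := by
      rw [← hdv.2, Multiset.prod_cons]
    calc a = u * t.prod := ha
      _ ≤ p * t.prod := hcomp _ _ _ hu
      _ = v := hveq.symm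
      _ ≤ b := hv

/-- general subtraction for x with a given decomposition. -/
lemma aux_sub
    (hbot : ∀ x : M, (1 : M) ≤ x)
    (hcomp : ∀ x y z : M, x ≤ y → x * z ≤ y * z)
    (hpre : ∀ x y z : M, x ≤ y * z → ∃ y' z', x = y' * z' ∧ y' ≤ y ∧ z' ≤ z)
    (harch : ∀ x y : M, (∀ n : ℕ, x ^ n ≤ y) → x = 1)
    (hex : ∀ m : M, ∃ d : Multiset M, IsDecomp d m)
    (d : Multiset M) :
    ∀ y z : M, (∀ p ∈ d, Indec p) →
      (∀ d1 d2 : Multiset M, IsDecomp d1 (d.prod * y) → IsDecomp d2 (d.prod * y) → d1 = d2) →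
      d.prod * y ≤ d.prod * z → y ≤ z := by
  induction d using Multiset.induction_on with
  | empty =>
    intro y z _ _ h
    simpa using h
  | cons p t ih =>
    intro y z hind huq h
    simp only [Multiset.prod_cons, mul_assoc] at h huq
    have hp : Indec p := hind p (Multiset.mem_cons_self _ _)
    have h' : t.prod * y ≤ t.prod * z :=
      aux_core hbot hcomp hpre harch hex hp huq h
    have huq' : ∀ d1 d2 : Multiset M, IsDecomp d1 (t.prod * y) →
        IsDecomp d2 (t.prod * y) → d1 = d2 := by
      intro d1 d2 h1 h2
      have c1 : IsDecomp (p ::ₘ d1) (p * (t.prod * y)) := by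
        constructor
        · intro q hq
          rcases Multiset.mem_cons.mp hq with rfl | hq
          · exact hp
          · exact h1.1 q hq
        · rw [Multiset.prod_cons, h1.2]
      have c2 : IsDecomp (p ::ₘ d2) (p * (t.prod * y)) := by
        constructor
        · intro q hq
          rcases Multiset.mem_cons.mp hq with rfl | hq
          · exact hp
          · exact h2.1 q hq
        · rw [Multiset.prod_cons, h2.2]
      exact (Multiset.cons_inj_right p).mp (huq _ _ c1 c2)
    exact ih y z (fun q hq => hind q (Multiset.mem_cons_of_mem hq)) huq' h'

end Aux

/-- Let M be a commutative monoid with a weak decomposition order ≤ (well-founded,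
identity least, compatible, precompositional, Archimedean) in which every element has
at least one decomposition. If x·y has a unique decomposition and x·y < x·z,
then y < z. -/
theorem subtraction_lemma {M : Type*} [CommMonoid M] [PartialOrder M]
    (hwf : WellFounded ((· < ·) : M → M → Prop))
    (hbot : ∀ x : M, (1 : M) ≤ x)
    (hcomp : ∀ x y z : M, x ≤ y → x * z ≤ y * z)
    (hpre : ∀ x y z : M, x ≤ y * z → ∃ y' z', x = y' * z' ∧ y' ≤ y ∧ z' ≤ z)
    (harch : ∀ x y : M, (∀ n : ℕ, x ^ n ≤ y) → x = 1)
    (hex : ∀ m : M, ∃ d : Multiset M, IsDecomp d m)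
    (x y z : M)
    (hux : ∃ d : Multiset M, IsDecomp d (x * y))
    (huq : ∀ d d' : Multiset M, IsDecomp d (x * y) → IsDecomp d' (x * y) → d = d')
    (hlt : x * y < x * z) :
    y < z := by
  obtain ⟨dx, hdx⟩ := hex x
  have hxeq : dx.prod = x := hdx.2
  have hle : y ≤ z := by
    apply aux_sub hbot hcomp hpre harch hex dx y z hdx.1
    · intro d1 d2 h1 h2
      rw [hxeq] at h1 h2
      exact huq _ _ h1 h2
    · rw [hxeq]; exact hlt.le
  refine lt_of_le_of_ne hle (fun h => ?_)
  subst h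
  exact absurd rfl hlt.ne
end

section
/- Let M be a commutative monoid equipped with a weak decomposition order that satisfies power cancellation, and suppose every element of M has a decomposition into indecomposables. Then M has unique decomposition: every element has exactly one decomposition (multiset of indecomposables) up to multiset equality. -/
/-!
Uniqueness is proved by well-founded induction on `m`. Given two decompositions of `m`, let `p`
be a factor occurring in them that is maximal among all their factors, and split off every copy
of `p`: `m = p ^ a * x = p ^ b * y` where no factor of `x` or `y` lies above `p`, hence
(precompositionality) `p ≰ x` and `p ≰ y`. Once `a = b`, power cancellation gives `x = y`, and
`x < m` by the Archimedean property, so the induction hypothesis identifies the remainders.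

To see `a = b`, note that by induction `p ^ j` has the unique decomposition `p, …, p` whenever
`p ^ j < m`, so all factors of such a power are powers of `p`. Peeling the factors of the first
decomposition off one at a time with precompositionality then shows that `p ^ k < m` forces
`k ≤ a`; the boundary case `p ^ (a + 1) = m` is excluded by power cancellation.
-/

section OrderedMonoid

variable {M : Type*} [CommMonoid M] [PartialOrder M] [IsOrderedMonoid M]

theorem eq_one_of_mul_le_self (one_le : ∀ x : M, 1 ≤ x)
    (harch : ∀ x y : M, (∀ n : ℕ, x ^ n ≤ y) → x = 1) {x y : M} (h : x * y ≤ y) :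
    x = 1 := by
  refine harch x y fun n => ?_
  have hpow : x ^ n * y ≤ y := by
    induction n with
    | zero => simp
    | succ n ih =>
      calc x ^ (n + 1) * y = x * (x ^ n * y) := by rw [pow_succ', mul_assoc]
        _ ≤ x * y := mul_le_mul_right ih x
        _ ≤ y := h
  exact (le_mul_of_one_le_right' (one_le y)).trans hpow

theorem lt_mul_of_ne_one_left (one_le : ∀ x : M, 1 ≤ x)
    (harch : ∀ x y : M, (∀ n : ℕ, x ^ n ≤ y) → x = 1) {x y : M} (hx : x ≠ 1) : y < x * y :=
  (le_mul_of_one_le_left' (one_le x)).lt_of_ne fun h =>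
    hx (eq_one_of_mul_le_self one_le harch h.ge)

theorem pow_ne_one_of_ne_one (one_le : ∀ x : M, 1 ≤ x) {x : M} (hx : x ≠ 1) {n : ℕ}
    (hn : n ≠ 0) : x ^ n ≠ 1 :=
  (one_lt_pow' ((one_le x).lt_of_ne' hx) hn).ne'

end OrderedMonoid

section Indecomposable

variable {M : Type*} [CommMonoid M] [PartialOrder M]

theorem Indec.le_or_le_of_le_mul
    (hpre : ∀ x y z : M, x ≤ y * z → ∃ y' z', x = y' * z' ∧ y' ≤ y ∧ z' ≤ z)
    {p x y : M} (hp : Indec p) (h : p ≤ x * y) : p ≤ x ∨ p ≤ y := by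
  obtain ⟨u, v, rfl, hu, hv⟩ := hpre p x y h
  rcases hp.2 u v rfl with rfl | rfl
  · exact Or.inr (by simpa using hv)
  · exact Or.inl (by simpa using hu)

theorem Indec.exists_mem_le_of_le_prod (one_le : ∀ x : M, 1 ≤ x)
    (hpre : ∀ x y z : M, x ≤ y * z → ∃ y' z', x = y' * z' ∧ y' ≤ y ∧ z' ≤ z)
    {p : M} (hp : Indec p) {s : Multiset M} (h : p ≤ s.prod) : ∃ q ∈ s, p ≤ q := by
  induction s using Multiset.induction_on with
  | empty => exact absurd (le_antisymm h (one_le p)) hp.1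
  | cons q t ih =>
    rw [Multiset.prod_cons] at h
    rcases hp.le_or_le_of_le_mul hpre h with hq | ht
    · exact ⟨q, Multiset.mem_cons_self q t, hq⟩
    · obtain ⟨r, hr, hpr⟩ := ih ht
      exact ⟨r, Multiset.mem_cons_of_mem hr, hpr⟩

theorem Indec.not_le_prod_filter_ne [DecidableEq M] (one_le : ∀ x : M, 1 ≤ x)
    (hpre : ∀ x y z : M, x ≤ y * z → ∃ y' z', x = y' * z' ∧ y' ≤ y ∧ z' ≤ z)
    {p : M} (hp : Indec p) {s : Multiset M} (hmax : ∀ q ∈ s, ¬ p < q) :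
    ¬ p ≤ (s.filter (· ≠ p)).prod := fun h => by
  obtain ⟨q, hq, hpq⟩ := hp.exists_mem_le_of_le_prod one_le hpre h
  rw [Multiset.mem_filter] at hq
  exact hmax q hq.1 (hpq.lt_of_ne (Ne.symm hq.2))

end Indecomposable

theorem Multiset.replicate_count_add_filter_ne {α : Type*} [DecidableEq α] (s : Multiset α)
    (a : α) : replicate (s.count a) a + s.filter (· ≠ a) = s := by
  rw [← filter_eq', filter_add_not]

theorem Multiset.prod_eq_pow_count_mul_prod_filter_ne {M : Type*} [CommMonoid M] [DecidableEq M]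
    (s : Multiset M) (p : M) : s.prod = p ^ s.count p * (s.filter (· ≠ p)).prod := by
  rw [← prod_replicate, ← prod_add, replicate_count_add_filter_ne]

section Decomposition

variable {M : Type*} [CommMonoid M]

theorem IsDecomp.add {d e : Multiset M} {x y : M} (hd : IsDecomp d x) (he : IsDecomp e y) :
    IsDecomp (d + e) (x * y) := by
  refine ⟨fun q hq => ?_, by rw [Multiset.prod_add, hd.2, he.2]⟩
  rcases Multiset.mem_add.mp hq with hq | hq
  exacts [hd.1 q hq, he.1 q hq]

theorem isDecomp_replicate {p : M} (hp : Indec p) (n : ℕ) :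
    IsDecomp (Multiset.replicate n p) (p ^ n) :=
  ⟨fun _ hq => Multiset.eq_of_mem_replicate hq ▸ hp, Multiset.prod_replicate n p⟩

theorem IsDecomp.filter {d : Multiset M} {x : M} (hd : IsDecomp d x) (P : M → Prop)
    [DecidablePred P] : IsDecomp (d.filter P) (d.filter P).prod :=
  ⟨fun q hq => hd.1 q (Multiset.mem_of_mem_filter hq), rfl⟩

def FactorsArePowers (p : M) (n : ℕ) : Prop :=
  ∀ u v : M, u * v = p ^ n → ∃ i j, i + j = n ∧ u = p ^ i ∧ v = p ^ j

theorem factorsArePowers_of_forall_isDecomp (hex : ∀ m : M, ∃ d : Multiset M, IsDecomp d m)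
    {p : M} {n : ℕ} (huniq : ∀ d, IsDecomp d (p ^ n) → d = Multiset.replicate n p) :
    FactorsArePowers p n := by
  intro u v huv
  obtain ⟨D, hD⟩ := hex u
  obtain ⟨E, hE⟩ := hex v
  have hDE : D + E = Multiset.replicate n p := huniq _ (huv ▸ hD.add hE)
  obtain ⟨i, -, hi⟩ := Multiset.le_replicate_iff.mp (hDE ▸ Multiset.le_add_right D E)
  obtain ⟨j, -, hj⟩ := Multiset.le_replicate_iff.mp (hDE ▸ Multiset.le_add_left E D)
  subst hi hj
  refine ⟨i, j, ?_, ?_, ?_⟩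
  · simpa using congrArg Multiset.card hDE
  · rw [← hD.2, Multiset.prod_replicate]
  · rw [← hE.2, Multiset.prod_replicate]

end Decomposition

section Counting

variable {M : Type*} [CommMonoid M] [PartialOrder M] [IsOrderedMonoid M] [DecidableEq M]

theorem Indec.le_count_of_pow_le_prod (one_le : ∀ x : M, 1 ≤ x)
    (hpre : ∀ x y z : M, x ≤ y * z → ∃ y' z', x = y' * z' ∧ y' ≤ y ∧ z' ≤ z)
    (harch : ∀ x y : M, (∀ n : ℕ, x ^ n ≤ y) → x = 1)
    {p : M} (hp : Indec p) {s : Multiset M} (hmax : ∀ q ∈ s, ¬ p < q) {k : ℕ}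
    (hfac : ∀ j ≤ k, FactorsArePowers p j) (h : p ^ k ≤ s.prod) : k ≤ s.count p := by
  induction s using Multiset.induction_on generalizing k with
  | empty =>
    by_contra hk
    exact pow_ne_one_of_ne_one one_le hp.1 (by omega) (le_antisymm h (one_le _))
  | cons q t ih =>
    rw [Multiset.prod_cons] at h
    obtain ⟨u, v, huv, hu, hv⟩ := hpre _ _ _ h
    obtain ⟨i, j, hij, rfl, rfl⟩ := hfac k le_rfl u v huv.symm
    have hj : j ≤ t.count p := ih (fun r hr => hmax r (Multiset.mem_cons_of_mem hr))
      (fun l hl => hfac l (by omega)) hv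
    obtain rfl | hi := Nat.eq_zero_or_pos i
    · calc k = j := by omega
        _ ≤ t.count p := hj
        _ ≤ (q ::ₘ t).count p := Multiset.count_le_of_le p (Multiset.le_cons_self t q)
    · have hpq : p ≤ q := (le_self_pow (one_le p) hi.ne').trans hu
      obtain rfl : p = q :=
        by_contra fun hne => hmax q (Multiset.mem_cons_self q t) (hpq.lt_of_ne hne)
      have hi1 : i = 1 := by
        by_contra hi1
        refine hp.1 (eq_one_of_mul_le_self one_le harch (y := p) ?_)
        calc p * p = p ^ 2 := (sq p).symm
          _ ≤ p ^ i := pow_le_pow_right' (one_le p) (by omega)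
          _ ≤ p := hu
      rw [Multiset.count_cons_self]
      omega

theorem Indec.le_count_of_pow_le (one_le : ∀ x : M, 1 ≤ x)
    (hpre : ∀ x y z : M, x ≤ y * z → ∃ y' z', x = y' * z' ∧ y' ≤ y ∧ z' ≤ z)
    (harch : ∀ x y : M, (∀ n : ℕ, x ^ n ≤ y) → x = 1)
    (hpc : ∀ x y p : M, Indec p → ¬ p < x → ¬ p < y →
      ∀ k : ℕ, p ^ k * x = p ^ k * y → x = y)
    {p m : M} (hp : Indec p) {d : Multiset M} (hd : IsDecomp d m) (hmax : ∀ q ∈ d, ¬ p < q)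
    (hfac : ∀ j, p ^ j < m → FactorsArePowers p j) {k : ℕ} (hk : p ^ k ≤ m) :
    k ≤ d.count p := by
  by_contra hka
  have hle : p ^ (d.count p + 1) ≤ m := (pow_le_pow_right' (one_le p) (by omega)).trans hk
  obtain hlt | heq := hle.lt_or_eq
  · have hfac' : ∀ j ≤ d.count p + 1, FactorsArePowers p j := fun j hj =>
      hfac j ((pow_le_pow_right' (one_le p) hj).trans_lt hlt)
    have := hp.le_count_of_pow_le_prod one_le hpre harch hmax hfac' (hd.2 ▸ hlt.le)
    omega
  · have hnle := hp.not_le_prod_filter_ne one_le hpre hmax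
    have hm := d.prod_eq_pow_count_mul_prod_filter_ne p
    rw [hd.2, ← heq, pow_succ] at hm
    have hx := hpc _ _ p hp (fun h => hnle h.le) (lt_irrefl p) _ hm.symm
    exact hnle hx.ge

theorem Indec.count_eq_count_of_isDecomp (one_le : ∀ x : M, 1 ≤ x)
    (hpre : ∀ x y z : M, x ≤ y * z → ∃ y' z', x = y' * z' ∧ y' ≤ y ∧ z' ≤ z)
    (harch : ∀ x y : M, (∀ n : ℕ, x ^ n ≤ y) → x = 1)
    (hpc : ∀ x y p : M, Indec p → ¬ p < x → ¬ p < y →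
      ∀ k : ℕ, p ^ k * x = p ^ k * y → x = y)
    {p m : M} (hp : Indec p) {d e : Multiset M} (hd : IsDecomp d m) (he : IsDecomp e m)
    (hmaxd : ∀ q ∈ d, ¬ p < q) (hmaxe : ∀ q ∈ e, ¬ p < q)
    (hfac : ∀ j, p ^ j < m → FactorsArePowers p j) : d.count p = e.count p := by
  have hpow_le : ∀ f : Multiset M, IsDecomp f m → p ^ f.count p ≤ m := fun f hf => by
    rw [← hf.2, f.prod_eq_pow_count_mul_prod_filter_ne p]
    exact le_mul_of_one_le_right' (one_le _)
  exact le_antisymm (hp.le_count_of_pow_le one_le hpre harch hpc he hmaxe hfac (hpow_le d hd))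
    (hp.le_count_of_pow_le one_le hpre harch hpc hd hmaxd hfac (hpow_le e he))

theorem eq_of_isDecomp_of_forall_lt (one_le : ∀ x : M, 1 ≤ x)
    (hpre : ∀ x y z : M, x ≤ y * z → ∃ y' z', x = y' * z' ∧ y' ≤ y ∧ z' ≤ z)
    (harch : ∀ x y : M, (∀ n : ℕ, x ^ n ≤ y) → x = 1)
    (hpc : ∀ x y p : M, Indec p → ¬ p < x → ¬ p < y →
      ∀ k : ℕ, p ^ k * x = p ^ k * y → x = y)
    (hex : ∀ m : M, ∃ d : Multiset M, IsDecomp d m)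
    {m : M} (IH : ∀ x < m, ∀ d e : Multiset M, IsDecomp d x → IsDecomp e x → d = e)
    {d e : Multiset M} (hd : IsDecomp d m) (he : IsDecomp e m) : d = e := by
  rcases eq_or_ne (d + e) 0 with h0 | h0
  · obtain ⟨rfl, rfl⟩ := add_eq_zero.mp h0
    rfl
  obtain ⟨p, hpmax⟩ := (d + e).toFinset.exists_maximal (Multiset.toFinset_nonempty.mpr h0)
  have hpde : p ∈ d + e := Multiset.mem_toFinset.mp hpmax.prop
  have hp : Indec p := (hd.add he).1 p hpde
  have hmaxd : ∀ q ∈ d, ¬ p < q := fun q hq =>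
    hpmax.not_gt (Multiset.mem_toFinset.mpr (Multiset.mem_add.mpr (.inl hq)))
  have hmaxe : ∀ q ∈ e, ¬ p < q := fun q hq =>
    hpmax.not_gt (Multiset.mem_toFinset.mpr (Multiset.mem_add.mpr (.inr hq)))
  have hfac : ∀ j, p ^ j < m → FactorsArePowers p j := fun j hj =>
    factorsArePowers_of_forall_isDecomp hex fun c hc => IH _ hj _ _ hc (isDecomp_replicate hp j)
  have hcount : d.count p = e.count p :=
    hp.count_eq_count_of_isDecomp one_le hpre harch hpc hd he hmaxd hmaxe hfac
  have hcount0 : d.count p ≠ 0 := by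
    rcases Multiset.mem_add.mp hpde with h | h
    · exact (Multiset.count_pos.mpr h).ne'
    · exact hcount ▸ (Multiset.count_pos.mpr h).ne'
  have hdm := hd.2 ▸ d.prod_eq_pow_count_mul_prod_filter_ne p
  have hem := he.2 ▸ e.prod_eq_pow_count_mul_prod_filter_ne p
  have hrest : (d.filter (· ≠ p)).prod = (e.filter (· ≠ p)).prod :=
    hpc _ _ p hp (fun h => hp.not_le_prod_filter_ne one_le hpre hmaxd h.le)
      (fun h => hp.not_le_prod_filter_ne one_le hpre hmaxe h.le) _ (hdm.symm.trans (hcount ▸ hem))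
  have hlt : (d.filter (· ≠ p)).prod < m :=
    hdm ▸ lt_mul_of_ne_one_left one_le harch (pow_ne_one_of_ne_one one_le hp.1 hcount0)
  have hfilter := IH _ hlt _ _ (hd.filter _) (hrest ▸ he.filter _)
  rw [← d.replicate_count_add_filter_ne p, ← e.replicate_count_add_filter_ne p, hcount, hfilter]

end Counting

/-- Let M be a commutative monoid equipped with a weak decomposition order
(well-founded, identity least, compatible, precompositional, Archimedean) that
satisfies power cancellation, and suppose every element has a decomposition.
Then M has unique decomposition. -/
theorem unique_decomposition {M : Type*} [CommMonoid M] [PartialOrder M]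
    (hwf : WellFounded ((· < ·) : M → M → Prop))
    (hbot : ∀ x : M, (1 : M) ≤ x)
    (hcomp : ∀ x y z : M, x ≤ y → x * z ≤ y * z)
    (hpre : ∀ x y z : M, x ≤ y * z → ∃ y' z', x = y' * z' ∧ y' ≤ y ∧ z' ≤ z)
    (harch : ∀ x y : M, (∀ n : ℕ, x ^ n ≤ y) → x = 1)
    (hpc : ∀ x y p : M, Indec p → ¬ p < x → ¬ p < y →
      ∀ k : ℕ, p ^ k * x = p ^ k * y → x = y)
    (hex : ∀ m : M, ∃ d : Multiset M, IsDecomp d m) :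
    ∀ m : M, ∃! d : Multiset M, IsDecomp d m := by
  classical
  have : IsOrderedMonoid M := { mul_le_mul_left := fun x y h z => hcomp x y z h }
  have huniq : ∀ m : M, ∀ d e, IsDecomp d m → IsDecomp e m → d = e := fun m =>
    hwf.induction m fun _ IH _ _ => eq_of_isDecomp_of_forall_lt hbot hpre harch hpc hex IH
  intro m
  obtain ⟨d, hd⟩ := hex m
  exact ⟨d, hd, fun e he => huniq m e d he hd⟩
end

section
/- The decomposition extension ⊑ of a well-founded partial order ≤ on a commutative monoid M is well-founded, where d ⊑' d' holds when d is obtained from a decomposition d' by replacing a nonempty sub-multiset of indecomposables {p₁,…,pₖ} of d' by decompositions d₁,…,dₖ of elements x₁,…,xₖ with xᵢ strictly below pᵢ. -/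
/-- The (strict) decomposition extension of the order: d ⊏ d' holds when d is obtained
from d' by replacing a nonempty sub-multiset of indecomposables p₁,…,pₖ of d' by
decompositions d₁,…,dₖ of elements x₁,…,xₖ with xᵢ strictly below pᵢ. -/
def DecExt {M : Type*} [CommMonoid M] [PartialOrder M] (d d' : Multiset M) : Prop :=
  ∃ l : List (M × Multiset M), l ≠ [] ∧
    (∀ pr ∈ l, Indec pr.1 ∧ (∀ q ∈ pr.2, Indec q) ∧ pr.2.prod < pr.1) ∧
    ∃ rest : Multiset M,
      d' = rest + (l.map Prod.fst : List M) ∧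
      d = rest + (l.map Prod.snd).sum

theorem DecExt.isDershowitzMannaLT {M : Type*} [CommMonoid M] [PartialOrder M]
    [IsOrderedMonoid M] (hbot : ∀ x : M, 1 ≤ x) {d d' : Multiset M} (h : DecExt d d') :
    d.IsDershowitzMannaLT d' := by
  obtain ⟨l, hl, hlt, rest, rfl, rfl⟩ := h
  refine ⟨rest, (l.map Prod.snd).sum, (l.map Prod.fst : List M), by simpa using hl, rfl, rfl, ?_⟩
  intro q hq
  rw [← Multiset.sum_coe] at hq
  obtain ⟨s, hs, hqs⟩ := Multiset.mem_join.1 hq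
  obtain ⟨pr, hpr, rfl⟩ := List.mem_map.1 (Multiset.mem_coe.1 hs)
  -- with `1` at the bottom a factor lies below the product, so `q ≤ dᵢ.prod < pᵢ`
  exact ⟨pr.1, Multiset.mem_coe.2 (List.mem_map_of_mem hpr),
    (Multiset.single_le_prod (fun x _ => hbot x) q hqs).trans_lt (hlt pr hpr).2.2⟩

theorem decExt_wellFounded_general {M : Type*} [CommMonoid M] [PartialOrder M]
    (hwf : WellFounded ((· < ·) : M → M → Prop))
    (hbot : ∀ x : M, (1 : M) ≤ x)
    (hcomp : ∀ x y z : M, x ≤ y → x * z ≤ y * z) :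
    WellFounded (DecExt (M := M)) := by
  have : WellFoundedLT M := ⟨hwf⟩
  have : IsOrderedMonoid M := { mul_le_mul_left := fun x y h z => hcomp x y z h }
  exact Subrelation.wf (DecExt.isDershowitzMannaLT hbot) Multiset.wellFounded_isDershowitzMannaLT

/-- For a commutative monoid with a weak decomposition order in which every element
has a decomposition, the decomposition extension of the order is well-founded. -/
theorem decExt_wellFounded {M : Type*} [CommMonoid M] [PartialOrder M]
    (hwf : WellFounded ((· < ·) : M → M → Prop))
    (hbot : ∀ x : M, (1 : M) ≤ x)
    (hcomp : ∀ x y z : M, x ≤ y → x * z ≤ y * z)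
    (hpre : ∀ x y z : M, x ≤ y * z → ∃ y' z', x = y' * z' ∧ y' ≤ y ∧ z' ≤ z)
    (harch : ∀ x y : M, (∀ n : ℕ, x ^ n ≤ y) → x = 1)
    (hex : ∀ m : M, ∃ d : Multiset M, IsDecomp d m) :
    WellFounded (DecExt (M := M)) :=
  decExt_wellFounded_general hwf hbot hcomp
end

section
/- In the process calculus with inaction 0, action prefix, choice, interleaving parallel composition, and iteration prefix a*P (a ≠ τ), the process expression a*0 has no parallel decomposition modulo branching bisimilarity: there is no finite multiset of indecomposable equivalence classes whose parallel composition is branching bisimilar to a*0. In particular, a*0 is branching bisimilar to a*0 ∥ a*0. -/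
/-!
Call a process *live* for `a` if each of its reachable states performs only `a`- and
τ-transitions and can reach an `a`-transition through τ-steps. The processes branching
bisimilar to `a*0` are exactly the live ones, and "both live" is itself a branching
bisimulation, so any two live processes are bisimilar; in particular
`a*0 ↔b a*0 ∥ a*0`. If `P ∥ Q` is live, then either `P` is live, or `P` reaches a state
that can never do `a` again, after which `Q` has to supply every `a`-step, so `Q` is live.
Hence some factor of a decomposition of `a*0` is live, and therefore bisimilar to
`a*0 ∥ a*0`, which is not indecomposable because `a*0` is not bisimilar to `0`.
-/

/-- Process expressions: inaction, prefix, choice, interleaving parallel composition,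
and iteration prefix. Labels are `Option A`, with `none` playing the role of τ. -/
inductive PExp (A : Type) : Type
  | nil : PExp A
  | pre : Option A → PExp A → PExp A
  | choice : PExp A → PExp A → PExp A
  | par : PExp A → PExp A → PExp A
  | star : Option A → PExp A → PExp A

namespace PExp

/-- The labelled transition relation. -/
inductive Step {A : Type} : PExp A → Option A → PExp A → Prop
  | pre (α : Option A) (P : PExp A) : Step (PExp.pre α P) α P
  | choiceL {P α P'} (Q) : Step P α P' → Step (PExp.choice P Q) α P'
  | choiceR {Q α Q'} (P) : Step Q α Q' → Step (PExp.choice P Q) α Q'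
  | parL {P α P'} (Q) : Step P α P' → Step (PExp.par P Q) α (PExp.par P' Q)
  | parR {Q α Q'} (P) : Step Q α Q' → Step (PExp.par P Q) α (PExp.par P Q')
  | star (α : Option A) (P : PExp A) : Step (PExp.star α P) α (PExp.star α P)
  | starStep {P β P'} (α) : Step P β P' → Step (PExp.star α P) β P'

/-- P ⇒ Q : zero or more τ-steps. -/
def TauSteps {A : Type} (P Q : PExp A) : Prop :=
  Relation.ReflTransGen (fun X Y => Step X none Y) P Q

/-- P (→α) Q or (α = τ and P = Q). -/
def OptStep {A : Type} (P : PExp A) (α : Option A) (P' : PExp A) : Prop :=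
  Step P α P' ∨ (α = none ∧ P = P')

/-- R is a branching bisimulation. -/
def IsBranchingBisim {A : Type} (R : PExp A → PExp A → Prop) : Prop :=
  Symmetric R ∧ ∀ P Q, R P Q → ∀ α P', Step P α P' →
    ∃ Q'' Q', TauSteps Q Q'' ∧ OptStep Q'' α Q' ∧ R P Q'' ∧ R P' Q'

/-- Branching bisimilarity. -/
def BBisim {A : Type} (P Q : PExp A) : Prop :=
  ∃ R, IsBranchingBisim R ∧ R P Q

/-- R is a weak bisimulation. -/
def IsWeakBisim {A : Type} (R : PExp A → PExp A → Prop) : Prop :=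
  Symmetric R ∧ ∀ P Q, R P Q → ∀ α P', Step P α P' →
    ∃ Q'' Q''' Q', TauSteps Q Q'' ∧ OptStep Q'' α Q''' ∧ TauSteps Q''' Q' ∧ R P' Q'

/-- Weak bisimilarity. -/
def WBisim {A : Type} (P Q : PExp A) : Prop :=
  ∃ R, IsWeakBisim R ∧ R P Q

/-- A step with some label. -/
def AnyStep {A : Type} (P Q : PExp A) : Prop := ∃ α, Step P α Q

/-- Reachability: reflexive-transitive closure of the one-step transition relation. -/
def Reaches {A : Type} : PExp A → PExp A → Prop := Relation.ReflTransGen AnyStep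

/-- P has no outgoing transitions. -/
def Deadlock {A : Type} (P : PExp A) : Prop := ∀ α Q, ¬ Step P α Q

/-- P can reach a deadlocked expression. -/
def WeaklyNormed {A : Type} (P : PExp A) : Prop := ∃ P', Reaches P P' ∧ Deadlock P'

/-- `NormWitness P k`: there is a complete transition sequence from P to a deadlocked
expression containing exactly k non-τ transitions. -/
inductive NormWitness {A : Type} : PExp A → ℕ → Prop
  | dead {P} : Deadlock P → NormWitness P 0
  | tau {P P' k} : Step P none P' → NormWitness P' k → NormWitness P k
  | act {P a P' k} : Step P (some a) P' → NormWitness P' k → NormWitness P (k + 1)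

/-- The weak norm of P is k: k is the least number of non-τ transitions in a complete
transition sequence from P. -/
def IsWeakNorm {A : Type} (P : PExp A) (k : ℕ) : Prop :=
  NormWitness P k ∧ ∀ j, NormWitness P j → k ≤ j

/-- P ⇒a Q : a weak a-step (a ≠ τ), absorbing τ-steps on both sides. -/
def WStep {A : Type} (P : PExp A) (a : A) (Q : PExp A) : Prop :=
  ∃ P₁ Q₁, TauSteps P P₁ ∧ Step P₁ (some a) Q₁ ∧ TauSteps Q₁ Q

/-- `WChain P k`: there is a sequence of k weak (non-τ) steps starting from P. -/
inductive WChain {A : Type} : PExp A → ℕ → Prop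
  | zero (P) : WChain P 0
  | succ {P a P' k} : WStep P a P' → WChain P' k → WChain P (k + 1)

/-- P is weakly bounded: some k bounds the number of non-τ steps of every sequence. -/
def WeaklyBounded {A : Type} (P : PExp A) : Prop := ∃ k, ∀ l, WChain P l → l ≤ k

/-- The weak depth of P is k: the length of a longest transition sequence from P not
counting τ-transitions. -/
def IsWeakDepth {A : Type} (P : PExp A) (k : ℕ) : Prop :=
  WChain P k ∧ ∀ l, WChain P l → l ≤ k

/-- Indecomposability with respect to a behavioural equivalence E: P is not equivalent
to 0 nor to a parallel composition of two processes not equivalent to 0. -/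
def IndecompWith {A : Type} (E : PExp A → PExp A → Prop) (P : PExp A) : Prop :=
  ¬ E P PExp.nil ∧ ∀ Q R, E P (PExp.par Q R) → E Q PExp.nil ∨ E R PExp.nil

end PExp

open PExp

namespace PExp

variable {A : Type} {a : A} {α : Option A} {P Q U U' V X X' Y Y' Z W : PExp A}

theorem TauSteps.reaches (h : TauSteps P Q) : Reaches P Q :=
  Relation.ReflTransGen.mono (fun _ _ h => ⟨none, h⟩) _ _ h

theorem TauSteps.parL (Y : PExp A) (h : TauSteps X X') : TauSteps (par X Y) (par X' Y) :=
  h.lift (fun X => par X Y) fun _ _ => Step.parL Y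

theorem TauSteps.parR (X : PExp A) (h : TauSteps Y Y') : TauSteps (par X Y) (par X Y') :=
  h.lift (fun Y => par X Y) fun _ _ => Step.parR X

theorem Reaches.parL (Y : PExp A) (h : Reaches X X') : Reaches (par X Y) (par X' Y) :=
  h.lift (fun X => par X Y) fun _ _ ⟨β, h⟩ => ⟨β, Step.parL Y h⟩

theorem Reaches.parR (X : PExp A) (h : Reaches Y Y') : Reaches (par X Y) (par X Y') :=
  h.lift (fun Y => par X Y) fun _ _ ⟨β, h⟩ => ⟨β, Step.parR X h⟩

theorem TauSteps.par_inv (h : TauSteps (par X Y) W) :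
    ∃ X' Y', W = par X' Y' ∧ TauSteps X X' ∧ TauSteps Y Y' := by
  induction h with
  | refl => exact ⟨X, Y, rfl, .refl, .refl⟩
  | tail _ hst ih =>
    obtain ⟨X', Y', rfl, hX, hY⟩ := ih
    cases hst with
    | parL _ h => exact ⟨_, Y', rfl, hX.tail h, hY⟩
    | parR _ h => exact ⟨X', _, rfl, hX, hY.tail h⟩

theorem Reaches.par_inv (h : Reaches (par X Y) W) :
    ∃ X' Y', W = par X' Y' ∧ Reaches X X' ∧ Reaches Y Y' := by
  induction h with
  | refl => exact ⟨X, Y, rfl, .refl, .refl⟩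
  | tail _ hst ih =>
    obtain ⟨X', Y', rfl, hX, hY⟩ := ih
    obtain ⟨β, hst⟩ := hst
    cases hst with
    | parL _ h => exact ⟨_, Y', rfl, hX.tail ⟨β, h⟩, hY⟩
    | parR _ h => exact ⟨X', _, rfl, hX, hY.tail ⟨β, h⟩⟩

theorem WStep.parL (Y : PExp A) (h : WStep X a X') : WStep (par X Y) a (par X' Y) := by
  obtain ⟨X₁, X₂, ht, hs, ht'⟩ := h
  exact ⟨_, _, ht.parL Y, Step.parL Y hs, ht'.parL Y⟩

theorem WStep.par_inv (h : WStep (par X Y) a W) :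
    (∃ X', WStep X a X') ∨ ∃ Y', WStep Y a Y' := by
  obtain ⟨W₁, W₂, ht, hs, -⟩ := h
  obtain ⟨X₁, Y₁, rfl, hX, hY⟩ := ht.par_inv
  cases hs with
  | parL _ h => exact Or.inl ⟨_, X₁, _, hX, h, .refl⟩
  | parR _ h => exact Or.inr ⟨_, Y₁, _, hY, h, .refl⟩

theorem tauSteps_eq_of_deadlock (hP : Deadlock P) (h : TauSteps P Q) : Q = P := by
  rcases h.cases_head with rfl | ⟨R, hst, -⟩
  · rfl
  · exact absurd hst (hP none R)

theorem step_star_nil (h : Step (star (some a) nil) α Q) :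
    α = some a ∧ Q = star (some a) nil := by
  cases h with
  | star => exact ⟨rfl, rfl⟩
  | starStep _ h => nomatch h

theorem tauSteps_star_nil (h : TauSteps (star (some a) nil) Q) : Q = star (some a) nil := by
  induction h with
  | refl => rfl
  | tail _ hst ih => subst ih; exact (step_star_nil hst).2

theorem BBisim.symm (h : BBisim P Q) : BBisim Q P :=
  let ⟨R, hR, hPQ⟩ := h
  ⟨R, hR, hR.1 hPQ⟩

def Live (a : A) (Z : PExp A) : Prop :=
  ∀ U, Reaches Z U → (∀ α U', Step U α U' → α = some a ∨ α = none) ∧ ∃ U', WStep U a U'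

theorem Live.reaches (hZ : Live a Z) (h : Reaches Z U) : Live a U :=
  fun V hV => hZ V (h.trans hV)

theorem live_star_nil : Live a (star (some a) nil) := by
  intro U hU
  obtain rfl : U = star (some a) nil := by
    induction hU with
    | refl => rfl
    | tail _ hst ih => obtain ⟨β, hst⟩ := hst; subst ih; exact (step_star_nil hst).2
  exact ⟨fun α U' hst => Or.inl (step_star_nil hst).1, _, _, _, .refl, Step.star _ _, .refl⟩

theorem not_live_nil : ¬ Live a (nil : PExp A) := by
  intro h
  have hdead : Deadlock (nil : PExp A) := fun _ _ h => nomatch h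
  obtain ⟨-, -, N, _, ht, hst, -⟩ := h nil .refl
  obtain rfl := tauSteps_eq_of_deadlock hdead ht
  exact hdead _ _ hst

theorem Live.of_par (h : Live a (par X Y)) : Live a X ∨ Live a Y := by
  by_cases hX : ∀ U, Reaches X U → ∃ U', WStep U a U'
  · left
    intro U hU
    exact ⟨fun α U' hst => (h _ (hU.parL Y)).1 α _ (Step.parL Y hst), hX U hU⟩
  · right
    push Not at hX
    obtain ⟨X₀, hX₀, hstuck⟩ := hX
    intro V hV
    refine ⟨fun α V' hst => (h _ (hV.parR X)).1 α _ (Step.parR X hst), ?_⟩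
    obtain ⟨W, hW⟩ := (h _ ((hX₀.parL Y).trans (hV.parR X₀))).2
    rcases hW.par_inv with ⟨X', hX'⟩ | hV'
    · exact absurd hX' (hstuck X')
    · exact hV'

theorem Live.par (hX : Live a X) (hY : Live a Y) : Live a (par X Y) := by
  intro W hW
  obtain ⟨X', Y', rfl, hX', hY'⟩ := hW.par_inv
  refine ⟨fun α W' hst => ?_, ?_⟩
  · cases hst with
    | parL _ h => exact (hX X' hX').1 _ _ h
    | parR _ h => exact (hY Y' hY').1 _ _ h
  · obtain ⟨X'', hx⟩ := (hX X' hX').2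
    exact ⟨_, hx.parL Y'⟩

theorem isBranchingBisim_live : IsBranchingBisim fun U V : PExp A => Live a U ∧ Live a V := by
  refine ⟨fun _ _ h => h.symm, ?_⟩
  rintro U V ⟨hU, hV⟩ α U' hst
  have hU' : Live a U' := hU.reaches (.single ⟨α, hst⟩)
  rcases (hU U .refl).1 α U' hst with rfl | rfl
  · obtain ⟨-, V₁, V₂, ht, hs, -⟩ := (hV V .refl).2
    exact ⟨V₁, V₂, ht, Or.inl hs, ⟨hU, hV.reaches ht.reaches⟩,
      ⟨hU', hV.reaches (ht.reaches.tail ⟨_, hs⟩)⟩⟩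
  · exact ⟨V, V, .refl, Or.inr ⟨rfl, rfl⟩, ⟨hU, hV⟩, ⟨hU', hV⟩⟩

theorem bbisim_of_live (hZ : Live a Z) (hW : Live a W) : BBisim Z W :=
  ⟨_, isBranchingBisim_live, hZ, hW⟩

section StarNil

variable {R : PExp A → PExp A → Prop}

theorem IsBranchingBisim.step_of_rel_star_nil (hR : IsBranchingBisim R)
    (hU : R U (star (some a) nil)) (hst : Step U α U') :
    (α = some a ∨ α = none) ∧ R U' (star (some a) nil) := by
  obtain ⟨Q'', Q', ht, ho, -, hrel⟩ := hR.2 U _ hU α U' hst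
  obtain rfl := tauSteps_star_nil ht
  rcases ho with hs | ⟨rfl, rfl⟩
  · obtain ⟨rfl, rfl⟩ := step_star_nil hs
    exact ⟨Or.inl rfl, hrel⟩
  · exact ⟨Or.inr rfl, hrel⟩

theorem IsBranchingBisim.wStep_of_rel_star_nil (hR : IsBranchingBisim R)
    (hU : R U (star (some a) nil)) : ∃ U', WStep U a U' := by
  obtain ⟨U₁, U₂, ht, ho, -⟩ := hR.2 _ U (hR.1 hU) (some a) _ (Step.star (some a) nil)
  rcases ho with hs | ⟨h, -⟩
  · exact ⟨U₂, U₁, U₂, ht, hs, .refl⟩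
  · nomatch h

theorem live_of_bbisim_star_nil (h : BBisim Z (star (some a) nil)) : Live a Z := by
  obtain ⟨R, hR, hZ⟩ := h
  intro U hU
  have hRU : R U (star (some a) nil) := by
    induction hU with
    | refl => exact hZ
    | tail _ hst ih => obtain ⟨β, hst⟩ := hst; exact (hR.step_of_rel_star_nil ih hst).2
  exact ⟨fun α U' hst => (hR.step_of_rel_star_nil hRU hst).1, hR.wStep_of_rel_star_nil hRU⟩

end StarNil

theorem not_bbisim_star_nil_nil : ¬ BBisim (star (some a) nil) (nil : PExp A) :=
  fun h => not_live_nil (live_of_bbisim_star_nil h.symm)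

theorem not_live_foldr_par (a : A) :
    ∀ l : List (PExp A), (∀ P ∈ l, IndecompWith BBisim P) → ¬ Live a (l.foldr par nil)
  | [], _, h => not_live_nil h
  | P :: l, hl, h => by
    rcases Live.of_par h with hP | hrest
    · have hPSS := bbisim_of_live hP (live_star_nil.par live_star_nil)
      rcases (hl P List.mem_cons_self).2 _ _ hPSS with h0 | h0 <;>
        exact not_bbisim_star_nil_nil h0
    · exact not_live_foldr_par a l (fun Q hQ => hl Q (List.mem_cons_of_mem P hQ)) hrest

end PExp

/-- The process a*0 (a ≠ τ) is branching bisimilar to a*0 ∥ a*0, and it has no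
parallel decomposition modulo branching bisimilarity: no finite collection of
indecomposable processes has a parallel composition branching bisimilar to a*0. -/
theorem star_nil_no_decomposition (A : Type) (a : A) :
    BBisim (star (some a) nil) (par (star (some a) nil) (star (some a) nil)) ∧
    ¬ ∃ l : List (PExp A),
        (∀ P ∈ l, IndecompWith BBisim P) ∧
        BBisim (l.foldr par nil) (star (some a) nil) := by
  refine ⟨bbisim_of_live live_star_nil (live_star_nil.par live_star_nil), ?_⟩
  rintro ⟨l, hl, h⟩
  exact not_live_foldr_par a l hl (live_of_bbisim_star_nil h)
end

section
/- In the process calculus, let P = a*(τ.b.0) and Q = b.0 (a, b ≠ τ). Then P ∥ P is branching bisimilar to P ∥ Q, although P is not branching bisimilar to Q. Consequently, parallel decompositions of totally normed processes modulo branching bisimilarity need not be unique: P ∥ P and P ∥ Q are two distinct decompositions of the same process, both P and Q being indecomposable. -/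
open PExp

namespace PExp
variable {A : Type}

theorem TauSteps.rfl {P : PExp A} : TauSteps P P := Relation.ReflTransGen.refl

theorem TauSteps.trans' {P Q R : PExp A} (h : TauSteps P Q) (h' : TauSteps Q R) :
    TauSteps P R := Relation.ReflTransGen.trans h h'

theorem TauSteps.one {P Q : PExp A} (h : Step P none Q) : TauSteps P Q :=
  Relation.ReflTransGen.single h

theorem TauSteps.parL' {P P' : PExp A} (Q : PExp A) (h : TauSteps P P') :
    TauSteps (par P Q) (par P' Q) := by
  induction h with
  | refl => exact .rfl
  | tail _ h ih => exact ih.tail (Step.parL _ h)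

theorem TauSteps.parR' {P P' : PExp A} (Q : PExp A) (h : TauSteps P P') :
    TauSteps (par Q P) (par Q P') := by
  induction h with
  | refl => exact .rfl
  | tail _ h ih => exact ih.tail (Step.parR _ h)

theorem tauSteps_par_inv {P Q U : PExp A} (h : TauSteps (par P Q) U) :
    ∃ P' Q', U = par P' Q' ∧ TauSteps P P' ∧ TauSteps Q Q' := by
  induction h with
  | refl => exact ⟨P, Q, rfl, .rfl, .rfl⟩
  | tail _ h ih =>
    obtain ⟨P', Q', rfl, h1, h2⟩ := ih
    cases h with
    | parL _ h => exact ⟨_, _, rfl, h1.tail h, h2⟩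
    | parR _ h => exact ⟨_, _, rfl, h1, h2.tail h⟩

theorem WStep.tau_left {P P₁ Q : PExp A} {e : A} (t : TauSteps P P₁)
    (h : WStep P₁ e Q) : WStep P e Q := by
  obtain ⟨M, N, t1, st, t2⟩ := h
  exact ⟨M, N, t.trans' t1, st, t2⟩

theorem WStep.tau_right {P Q Q₁ : PExp A} {e : A} (h : WStep P e Q₁)
    (t : TauSteps Q₁ Q) : WStep P e Q := by
  obtain ⟨M, N, t1, st, t2⟩ := h
  exact ⟨M, N, t1, st, t2.trans' t⟩

theorem WStep.parL' {P P' : PExp A} {e : A} (Q : PExp A) (h : WStep P e P') :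
    WStep (par P Q) e (par P' Q) := by
  obtain ⟨M, N, t1, st, t2⟩ := h
  exact ⟨par M Q, par N Q, t1.parL' Q, Step.parL _ st, t2.parL' Q⟩

theorem WStep.parR' {P P' : PExp A} {e : A} (Q : PExp A) (h : WStep P e P') :
    WStep (par Q P) e (par Q P') := by
  obtain ⟨M, N, t1, st, t2⟩ := h
  exact ⟨par Q M, par Q N, t1.parR' Q, Step.parR _ st, t2.parR' Q⟩

theorem wstep_par_inv {P Q U : PExp A} {e : A} (h : WStep (par P Q) e U) :
    ∃ P' Q', U = par P' Q' ∧
      ((WStep P e P' ∧ TauSteps Q Q') ∨ (TauSteps P P' ∧ WStep Q e Q')) := by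
  obtain ⟨M, N, t1, st, t2⟩ := h
  obtain ⟨P₁, Q₁, rfl, ta, tb⟩ := tauSteps_par_inv t1
  cases st with
  | parL _ hst =>
    obtain ⟨P₂, Q₂, rfl, tc, td⟩ := tauSteps_par_inv t2
    exact ⟨P₂, Q₂, rfl, Or.inl ⟨⟨P₁, _, ta, hst, tc⟩, tb.trans' td⟩⟩
  | parR _ hst =>
    obtain ⟨P₂, Q₂, rfl, tc, td⟩ := tauSteps_par_inv t2
    exact ⟨P₂, Q₂, rfl, Or.inr ⟨ta.trans' tc, ⟨Q₁, _, tb, hst, td⟩⟩⟩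

theorem WChain.tau {P P' : PExp A} {n : ℕ} (t : TauSteps P P') (h : WChain P' n) :
    WChain P n := by
  cases h with
  | zero => exact .zero P
  | succ hw hc => exact .succ (hw.tau_left t) hc

theorem WChain.le {P : PExp A} {n m : ℕ} (h : WChain P n) (hm : m ≤ n) :
    WChain P m := by
  induction h generalizing m with
  | zero => exact Nat.le_zero.mp hm ▸ .zero _
  | succ hw _ ih =>
    cases m with
    | zero => exact .zero _
    | succ m => exact .succ hw (ih (Nat.succ_le_succ_iff.mp hm))

theorem WChain.parL' {P : PExp A} {n : ℕ} (Q : PExp A) (h : WChain P n) :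
    WChain (par P Q) n := by
  induction h generalizing Q with
  | zero => exact .zero _
  | succ hw _ ih => exact .succ (hw.parL' Q) (ih Q)

theorem WChain.parR' {P : PExp A} {n : ℕ} (Q : PExp A) (h : WChain P n) :
    WChain (par Q P) n := by
  induction h generalizing Q with
  | zero => exact .zero _
  | succ hw _ ih => exact .succ (hw.parR' Q) (ih Q)

theorem WChain.par_add {P Q : PExp A} {i j : ℕ} (h : WChain P i) (h' : WChain Q j) :
    WChain (par P Q) (i + j) := by
  induction h with
  | zero => simpa using h'.parR' _
  | succ hw _ ih =>
    have h2 := WChain.succ (hw.parL' Q) ih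
    simpa [Nat.add_right_comm] using h2

theorem wchain_par_proj {P Q : PExp A} {n : ℕ} (h : WChain (par P Q) n) :
    ∃ i j, i + j = n ∧ WChain P i ∧ WChain Q j := by
  induction n generalizing P Q with
  | zero => exact ⟨0, 0, rfl, .zero _, .zero _⟩
  | succ n ih =>
    cases h with
    | succ hw hc =>
      obtain ⟨P', Q', rfl, hcase⟩ := wstep_par_inv hw
      obtain ⟨i, j, hij, h1, h2⟩ := ih hc
      cases hcase with
      | inl h' =>
        exact ⟨i + 1, j, by omega, .succ h'.1 h1, h2.tau h'.2⟩
      | inr h' =>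
        exact ⟨i, j + 1, by omega, h1.tau h'.1, .succ h'.2 h2⟩

end PExp
namespace PExp
variable {A : Type}

theorem tau_lift {R : PExp A → PExp A → Prop} (hR : IsBranchingBisim R)
    {U U' V : PExp A} (h : R U V) (t : TauSteps U U') :
    ∃ V', TauSteps V V' ∧ R U' V' := by
  induction t with
  | refl => exact ⟨V, .rfl, h⟩
  | tail _ hstep ih =>
    obtain ⟨V₁, tv, hM⟩ := ih
    obtain ⟨V₂, V₃, tv2, opt, _, hend⟩ := hR.2 _ _ hM none _ hstep
    cases opt with
    | inl hst => exact ⟨V₃, (tv.trans' tv2).tail hst, hend⟩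
    | inr heq => exact ⟨V₃, heq.2 ▸ tv.trans' tv2, hend⟩

theorem vis_lift {R : PExp A → PExp A → Prop} (hR : IsBranchingBisim R)
    {U U' V : PExp A} {e : A} (h : R U V) (hs : Step U (some e) U') :
    ∃ V'' V', TauSteps V V'' ∧ Step V'' (some e) V' ∧ R U V'' ∧ R U' V' := by
  obtain ⟨V'', V', t, opt, h1, h2⟩ := hR.2 _ _ h (some e) _ hs
  cases opt with
  | inl hst => exact ⟨V'', V', t, hst, h1, h2⟩
  | inr heq => exact absurd heq.1 (by simp)

theorem wstep_lift {R : PExp A → PExp A → Prop} (hR : IsBranchingBisim R)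
    {U U' V : PExp A} {e : A} (h : R U V) (hs : WStep U e U') :
    ∃ V', WStep V e V' ∧ R U' V' := by
  obtain ⟨M, N, t1, st, t2⟩ := hs
  obtain ⟨V₁, tv1, hM⟩ := tau_lift hR h t1
  obtain ⟨V₂, V₃, tv2, st', _, hN⟩ := vis_lift hR hM st
  obtain ⟨V₄, tv3, hend⟩ := tau_lift hR hN t2
  exact ⟨V₄, ⟨V₂, V₃, tv1.trans' tv2, st', tv3⟩, hend⟩

theorem wchain_lift {R : PExp A → PExp A → Prop} (hR : IsBranchingBisim R)
    {U V : PExp A} {n : ℕ} (h : R U V) (hc : WChain U n) : WChain V n := by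
  induction hc generalizing V with
  | zero => exact .zero _
  | succ hw _ ih =>
    obtain ⟨V₁, hw', h₁⟩ := wstep_lift hR h hw
    exact .succ hw' (ih h₁)

theorem BBisim.symm' {U V : PExp A} (h : BBisim U V) : BBisim V U := by
  obtain ⟨R, hR, hUV⟩ := h
  exact ⟨R, hR, hR.1 hUV⟩

theorem bbisim_isBisim : IsBranchingBisim (@BBisim A) := by
  constructor
  · intro X Y h; exact h.symm'
  · rintro X Y ⟨R, hR, hXY⟩ α X' hs
    obtain ⟨Y'', Y', h1, h2, h3, h4⟩ := hR.2 X Y hXY α X' hs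
    exact ⟨Y'', Y', h1, h2, ⟨R, hR, h3⟩, ⟨R, hR, h4⟩⟩

theorem bb_wchain {U V : PExp A} {n : ℕ} (h : BBisim U V) (hc : WChain U n) :
    WChain V n := wchain_lift bbisim_isBisim h hc

end PExp
namespace PExp
variable {A : Type}

/-- The process a*(τ.b.0). -/
abbrev Pe (a b : A) : PExp A := star (some a) (pre none (pre (some b) nil))
/-- The process b.0. -/
abbrev Qe (b : A) : PExp A := pre (some b) nil

variable {a b : A}

theorem step_P_inv {α : Option A} {X : PExp A} (h : Step (Pe a b) α X) :
    (α = some a ∧ X = Pe a b) ∨ (α = none ∧ X = Qe b) := by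
  cases h with
  | star => exact Or.inl ⟨rfl, rfl⟩
  | starStep _ h => cases h; exact Or.inr ⟨rfl, rfl⟩

theorem step_Q_inv {α : Option A} {X : PExp A} (h : Step (Qe b) α X) :
    α = some b ∧ X = nil := by
  cases h; exact ⟨rfl, rfl⟩

theorem step_nil {α : Option A} {X : PExp A} (h : Step (nil : PExp A) α X) : False := by
  cases h

theorem taus_P {X : PExp A} (h : TauSteps (Pe a b) X) : X = Pe a b ∨ X = Qe b := by
  induction h with
  | refl => exact Or.inl rfl
  | tail _ hstep ih =>
    cases ih with
    | inl h' =>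
      subst h'
      rcases step_P_inv hstep with ⟨h1, _⟩ | ⟨_, h2⟩
      · simp at h1
      · exact Or.inr h2
    | inr h' =>
      subst h'
      exact absurd (step_Q_inv hstep).1 (by simp)

theorem taus_Q {X : PExp A} (h : TauSteps (Qe b) X) : X = Qe b := by
  induction h with
  | refl => rfl
  | tail _ hstep ih =>
    subst ih
    exact absurd (step_Q_inv hstep).1 (by simp)

theorem taus_nil {X : PExp A} (h : TauSteps (nil : PExp A) X) : X = nil := by
  induction h with
  | refl => rfl
  | tail _ hstep ih => subst ih; exact (step_nil hstep).elim

theorem step_P_tau : Step (Pe a b) none (Qe b) :=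
  Step.starStep _ (Step.pre none _)

theorem wstep_P : WStep (Pe a b) a (Pe a b) := ⟨_, _, .rfl, Step.star _ _, .rfl⟩

theorem wchain_P (n : ℕ) : WChain (Pe a b) n := by
  induction n with
  | zero => exact .zero _
  | succ n ih => exact .succ wstep_P ih

theorem wstep_Q : WStep (Qe b) b nil := ⟨_, _, .rfl, Step.pre _ _, .rfl⟩

theorem wchain_Q1 : WChain (Qe b) 1 := .succ wstep_Q (.zero _)

theorem not_wchain_nil1 : ¬ WChain (nil : PExp A) 1 := by
  rintro (_ | ⟨⟨M, N, t1, st, t2⟩, hc⟩)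
  rw [taus_nil t1] at st
  exact step_nil st

theorem not_wchain_Q2 : ¬ WChain (Qe b) 2 := by
  rintro (_ | ⟨⟨M, N, t1, st, t2⟩, hc⟩)
  rw [taus_Q t1] at st
  rw [(step_Q_inv st).2] at t2
  rw [taus_nil t2] at hc
  exact not_wchain_nil1 hc

theorem classP_unb {U : PExp A} (h : BBisim U (Pe a b)) (n : ℕ) : WChain U n :=
  bb_wchain h.symm' (wchain_P n)

theorem classQ1 {U : PExp A} (h : BBisim U (Qe b)) : WChain U 1 :=
  bb_wchain h.symm' wchain_Q1

theorem classQ_not2 {U : PExp A} (h : BBisim U (Qe b)) : ¬ WChain U 2 :=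
  fun hc => not_wchain_Q2 (bb_wchain h hc)

theorem classN_not1 {U : PExp A} (h : BBisim U (nil : PExp A)) : ¬ WChain U 1 :=
  fun hc => not_wchain_nil1 (bb_wchain h hc)

theorem exclPQ {U : PExp A} (h : BBisim U (Pe a b)) (h' : BBisim U (Qe b)) : False :=
  classQ_not2 h' (classP_unb h 2)

theorem F1 {U U' : PExp A} (h : BBisim U (Pe a b)) (hs : Step U none U') :
    BBisim U' (Pe a b) ∨ BBisim U' (Qe b) := by
  obtain ⟨Z'', Z', t, opt, h1, h2⟩ := bbisim_isBisim.2 U (Pe a b) h none U' hs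
  rcases taus_P t with rfl | rfl
  · cases opt with
    | inl st =>
      rcases step_P_inv st with ⟨h3, _⟩ | ⟨_, rfl⟩
      · simp at h3
      · exact Or.inr h2
    | inr heq => exact Or.inl (heq.2 ▸ h2)
  · cases opt with
    | inl st => exact absurd (step_Q_inv st).1 (by simp)
    | inr heq => exact Or.inr (heq.2 ▸ h2)

theorem F2 {U U' : PExp A} {e : A} (h : BBisim U (Pe a b)) (hs : Step U (some e) U') :
    (e = a ∧ BBisim U' (Pe a b)) ∨ (e = b ∧ BBisim U' (nil : PExp A)) := by
  obtain ⟨Z'', Z', t, st, _, h2⟩ := vis_lift bbisim_isBisim h hs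
  rcases taus_P t with rfl | rfl
  · rcases step_P_inv st with ⟨h3, rfl⟩ | ⟨h3, _⟩
    · exact Or.inl ⟨Option.some.inj h3, h2⟩
    · simp at h3
  · obtain ⟨h3, rfl⟩ := step_Q_inv st
    exact Or.inr ⟨Option.some.inj h3, h2⟩

theorem F3 {U U' : PExp A} (h : BBisim U (Qe b)) (hs : Step U none U') :
    BBisim U' (Qe b) := by
  obtain ⟨Z'', Z', t, opt, h1, h2⟩ := bbisim_isBisim.2 U (Qe b) h none U' hs
  rw [taus_Q t] at opt
  cases opt with
  | inl st => exact absurd (step_Q_inv st).1 (by simp)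
  | inr heq => exact heq.2 ▸ h2

theorem pathPQ {U V : PExp A} (h : BBisim U (Pe a b)) (t : TauSteps U V) :
    BBisim V (Pe a b) ∨ BBisim V (Qe b) := by
  induction t with
  | refl => exact Or.inl h
  | tail _ hstep ih =>
    cases ih with
    | inl h' => exact F1 h' hstep
    | inr h' => exact Or.inr (F3 h' hstep)

theorem absorbQ {U V : PExp A} (h : BBisim U (Qe b)) (t : TauSteps U V) :
    BBisim V (Qe b) := by
  induction t with
  | refl => exact h
  | tail _ hstep ih => exact F3 ih hstep

theorem C1 {U : PExp A} (h : BBisim U (Pe a b)) :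
    ∃ U'' U', TauSteps U U'' ∧ Step U'' none U' ∧
      BBisim U'' (Pe a b) ∧ BBisim U' (Qe b) := by
  obtain ⟨U'', U', t, opt, h1, h2⟩ :=
    bbisim_isBisim.2 (Pe a b) U h.symm' none (Qe b) step_P_tau
  cases opt with
  | inl st => exact ⟨U'', U', t, st, h1.symm', h2.symm'⟩
  | inr heq => exact (exclPQ (heq.2 ▸ h1.symm') h2.symm').elim

theorem bb_nil_of_nw {X : PExp A} (h : ∀ (e : A) Y, ¬ WStep X e Y) :
    BBisim X (nil : PExp A) := by
  refine ⟨fun U V => (∀ (e : A) Y, ¬ WStep U e Y) ∧ (∀ (e : A) Y, ¬ WStep V e Y),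
    ⟨fun U V hUV => ⟨hUV.2, hUV.1⟩, ?_⟩, h, fun e Y hw => ?_⟩
  · rintro U V ⟨hU, hV⟩ α U' hs
    cases α with
    | some e => exact absurd ⟨U, U', .rfl, hs, .rfl⟩ (hU e U')
    | none =>
      exact ⟨V, V, .rfl, Or.inr ⟨rfl, rfl⟩, ⟨hU, hV⟩,
        ⟨fun e Y hw => hU e Y (hw.tau_left (.one hs)), hV⟩⟩
  · obtain ⟨M, N, t1, st, _⟩ := hw
    rw [taus_nil t1] at st
    exact step_nil st

theorem wv_of_not_bbnil {X : PExp A} (h : ¬ BBisim X (nil : PExp A)) :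
    ∃ (e : A) (Y : PExp A), WStep X e Y := by
  by_contra hc
  push_neg at hc
  exact h (bb_nil_of_nw hc)

theorem wchain1_of_wv {X : PExp A} (h : ∃ (e : A) (Y : PExp A), WStep X e Y) :
    WChain X 1 := by
  obtain ⟨e, Y, hw⟩ := h
  exact .succ hw (.zero _)

end PExp
namespace PExp
variable {A : Type}

theorem mirror_step {C D M : PExp A} {α : Option A} (h : Step (par C D) α M) :
    ∃ C' D', M = par C' D' ∧ Step (par D C) α (par D' C') := by
  cases h with
  | parL _ h => exact ⟨_, D, rfl, Step.parR _ h⟩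
  | parR _ h => exact ⟨C, _, rfl, Step.parL _ h⟩

theorem mirror_taus {C D M : PExp A} (h : TauSteps (par C D) M) :
    ∃ C' D', M = par C' D' ∧ TauSteps (par D C) (par D' C') := by
  obtain ⟨C', D', rfl, t1, t2⟩ := tauSteps_par_inv h
  exact ⟨C', D', rfl, (t2.parL' C).trans' (t1.parR' D')⟩

theorem bb_parComm {X Y Z : PExp A} (h : BBisim (par X Y) Z) :
    BBisim (par Y X) Z := by
  refine ⟨fun S T => BBisim S T ∨ (∃ C D, S = par D C ∧ BBisim (par C D) T) ∨
      (∃ C D, T = par D C ∧ BBisim S (par C D)), ⟨?_, ?_⟩,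
      Or.inr (Or.inl ⟨X, Y, rfl, h⟩)⟩
  · rintro S T (h' | ⟨C, D, rfl, h'⟩ | ⟨C, D, rfl, h'⟩)
    · exact Or.inl h'.symm'
    · exact Or.inr (Or.inr ⟨C, D, rfl, h'.symm'⟩)
    · exact Or.inr (Or.inl ⟨C, D, rfl, h'.symm'⟩)
  · rintro S T (h' | ⟨C, D, rfl, h'⟩ | ⟨C, D, rfl, h'⟩) α S' hs
    · obtain ⟨T'', T', t, opt, h1, h2⟩ := bbisim_isBisim.2 S T h' α S' hs
      exact ⟨T'', T', t, opt, Or.inl h1, Or.inl h2⟩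
    · cases hs with
      | parL _ hd =>
        obtain ⟨T'', T', t, opt, h1, h2⟩ :=
          bbisim_isBisim.2 (par C D) T h' α _ (Step.parR C hd)
        exact ⟨T'', T', t, opt, Or.inr (Or.inl ⟨C, D, rfl, h1⟩),
          Or.inr (Or.inl ⟨C, _, rfl, h2⟩)⟩
      | parR _ hc =>
        obtain ⟨T'', T', t, opt, h1, h2⟩ :=
          bbisim_isBisim.2 (par C D) T h' α _ (Step.parL D hc)
        exact ⟨T'', T', t, opt, Or.inr (Or.inl ⟨C, D, rfl, h1⟩),
          Or.inr (Or.inl ⟨_, D, rfl, h2⟩)⟩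
    · obtain ⟨M'', M', t, opt, h1, h2⟩ := bbisim_isBisim.2 S (par C D) h' α S' hs
      obtain ⟨C₂, D₂, rfl, t'⟩ := mirror_taus t
      cases opt with
      | inl st =>
        obtain ⟨C₃, D₃, rfl, st'⟩ := mirror_step st
        exact ⟨par D₂ C₂, par D₃ C₃, t', Or.inl st',
          Or.inr (Or.inr ⟨C₂, D₂, rfl, h1⟩), Or.inr (Or.inr ⟨C₃, D₃, rfl, h2⟩)⟩
      | inr heq =>
        exact ⟨par D₂ C₂, par D₂ C₂, t', Or.inr ⟨heq.1, rfl⟩,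
          Or.inr (Or.inr ⟨C₂, D₂, rfl, h1⟩),
          Or.inr (Or.inr ⟨C₂, D₂, rfl, heq.2 ▸ h2⟩)⟩

variable {a b : A}

theorem kill {X Y : PExp A} (hP : BBisim (par X Y) (Pe a b))
    (hx1 : WChain X 1) (hx2 : ¬ WChain X 2) (hy : ∀ n, WChain Y n) : False := by
  -- diamond property for tau-descendants of Y
  have diamond : ∀ d, TauSteps Y d →
      (BBisim (par X d) (Pe a b) ∧ ∀ n, WChain d n) ∨ ¬ WChain d 1 := by
    intro d t
    induction t with
    | refl => exact Or.inl ⟨hP, hy⟩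
    | tail tprev hstep ih =>
      cases ih with
      | inr h' => exact Or.inr (fun hc => h' (hc.tau (.one hstep)))
      | inl h' =>
        obtain ⟨hPd, hund⟩ := h'
        rcases F1 hPd (Step.parR _ hstep) with hp | hq
        · left
          refine ⟨hp, fun n => ?_⟩
          obtain ⟨i, j, hij, hXi, hdj⟩ := wchain_par_proj (classP_unb hp (n + 2))
          have hi : i ≤ 1 := by
            by_contra hgt
            push_neg at hgt
            exact hx2 (hXi.le (by omega))
          exact hdj.le (by omega)
        · right
          intro hc
          exact classQ_not2 hq (by simpa using hx1.par_add hc)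
  -- fire X's unique weak visible step, keeping Y frozen
  obtain ⟨e, x₂, hw⟩ : ∃ (e : A) (x₂ : PExp A), WStep X e x₂ := by
    cases hx1 with
    | succ hw _ => exact ⟨_, _, hw⟩
  obtain ⟨x₁, x₂', t1, st, t2⟩ := hw
  have h1 : BBisim (par x₁ Y) (Pe a b) := by
    rcases pathPQ hP (t1.parL' Y) with hp | hq
    · exact hp
    · exact (classQ_not2 hq ((hy 2).parR' _)).elim
  have h2 : BBisim (par x₂' Y) (Pe a b) := by
    rcases F2 h1 (Step.parL _ st) with ⟨_, hp⟩ | ⟨_, hn⟩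
    · exact hp
    · exact (classN_not1 hn ((hy 1).parR' _)).elim
  have h3 : BBisim (par x₂ Y) (Pe a b) := by
    rcases pathPQ h2 (t2.parL' Y) with hp | hq
    · exact hp
    · exact (classQ_not2 hq ((hy 2).parR' _)).elim
  have hx₂ : ¬ WChain x₂ 1 := fun hc => hx2 (.succ ⟨x₁, x₂', t1, st, t2⟩ hc)
  -- the committing tau-step out of (par x₂ Y) yields a contradiction
  obtain ⟨U'', U', tU, stτ, hU''P, hU'Q⟩ := C1 h3
  obtain ⟨c, d, rfl, tc, td⟩ := tauSteps_par_inv tU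
  have hc1 : ¬ WChain c 1 := fun h => hx₂ (h.tau tc)
  cases stτ with
  | parL _ hstep =>
    rcases diamond d td with ⟨_, hund⟩ | hnd
    · exact classQ_not2 hU'Q ((hund 2).parR' _)
    · obtain ⟨i, j, hij, hci, hdj⟩ := wchain_par_proj (classQ1 hU'Q)
      have hc' : ¬ WChain _ 1 := fun h => hc1 (h.tau (.one hstep))
      rcases (by omega : i = 0 ∧ j = 1 ∨ i = 1 ∧ j = 0) with ⟨_, rfl⟩ | ⟨rfl, _⟩
      · exact hnd hdj
      · exact hc' hci
  | parR _ hstep =>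
    rcases diamond _ (td.tail hstep) with ⟨_, hund⟩ | hnd
    · exact classQ_not2 hU'Q ((hund 2).parR' _)
    · obtain ⟨i, j, hij, hci, hdj⟩ := wchain_par_proj (classQ1 hU'Q)
      rcases (by omega : i = 0 ∧ j = 1 ∨ i = 1 ∧ j = 0) with ⟨_, rfl⟩ | ⟨rfl, _⟩
      · exact hnd hdj
      · exact hc1 hci

end PExp
namespace PExp
variable {A : Type} {a b : A}

theorem indecompP_aux {X Y : PExp A} (h : BBisim (Pe a b) (par X Y))
    (hx : ∃ (e : A) (X' : PExp A), WStep X e X')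
    (hy : ∃ (e : A) (Y' : PExp A), WStep Y e Y') : False := by
  have hsym : BBisim (par X Y) (Pe a b) := h.symm'
  have hX1 : WChain X 1 := wchain1_of_wv hx
  have hY1 : WChain Y 1 := wchain1_of_wv hy
  obtain ⟨U'', U', tU, stτ, hU''P, hU'Q⟩ := C1 hsym
  obtain ⟨Ax, B, rfl, tX, tY⟩ := tauSteps_par_inv tU
  have hU'1 := classQ1 hU'Q
  have hU'2 := classQ_not2 hU'Q
  cases stτ with
  | parR _ hstep =>
    rename_i B'
    have hAx2 : ¬ WChain Ax 2 := fun hc => hU'2 (hc.parL' _)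
    have hB'2 : ¬ WChain B' 2 := fun hc => hU'2 (hc.parR' _)
    have hBunb : ∀ n, WChain B n := by
      intro n
      obtain ⟨i, j, hij, hAi, hBj⟩ := wchain_par_proj (classP_unb hU''P (n + 2))
      have : i ≤ 1 := by
        by_contra hgt; push_neg at hgt; exact hAx2 (hAi.le (by omega))
      exact hBj.le (by omega)
    by_cases hA1 : WChain Ax 1
    · exact kill hU''P hA1 hAx2 hBunb
    · have hB'1 : WChain B' 1 := by
        obtain ⟨i, j, hij, hAi, hBj⟩ := wchain_par_proj hU'1
        rcases (by omega : i = 0 ∧ j = 1 ∨ i = 1 ∧ j = 0) with ⟨_, rfl⟩ | ⟨rfl, _⟩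
        · exact hBj
        · exact (hA1 hAi).elim
      have hXB : BBisim (par X B) (Pe a b) := by
        rcases pathPQ hsym (tY.parR' X) with hp | hq
        · exact hp
        · exact (exclPQ hU''P (absorbQ hq (tX.parL' B))).elim
      rcases F1 hXB (Step.parR X hstep) with hp | hq
      · have hXunb : ∀ n, WChain X n := by
          intro n
          obtain ⟨i, j, hij, hXi, hBj⟩ := wchain_par_proj (classP_unb hp (n + 2))
          have : j ≤ 1 := by
            by_contra hgt; push_neg at hgt; exact hB'2 (hBj.le (by omega))
          exact hXi.le (by omega)
        exact kill (bb_parComm hp) hB'1 hB'2 hXunb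
      · exact classQ_not2 hq (by simpa using hX1.par_add hB'1)
  | parL _ hstep =>
    rename_i A'
    have hB2 : ¬ WChain B 2 := fun hc => hU'2 (hc.parR' _)
    have hA'2 : ¬ WChain A' 2 := fun hc => hU'2 (hc.parL' _)
    have hAunb : ∀ n, WChain Ax n := by
      intro n
      obtain ⟨i, j, hij, hAi, hBj⟩ := wchain_par_proj (classP_unb hU''P (n + 2))
      have : j ≤ 1 := by
        by_contra hgt; push_neg at hgt; exact hB2 (hBj.le (by omega))
      exact hAi.le (by omega)
    by_cases hB1 : WChain B 1
    · exact kill (bb_parComm hU''P) hB1 hB2 hAunb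
    · have hA'1 : WChain A' 1 := by
        obtain ⟨i, j, hij, hAi, hBj⟩ := wchain_par_proj hU'1
        rcases (by omega : i = 0 ∧ j = 1 ∨ i = 1 ∧ j = 0) with ⟨_, rfl⟩ | ⟨rfl, _⟩
        · exact (hB1 hBj).elim
        · exact hAi
      have hAY : BBisim (par Ax Y) (Pe a b) := by
        rcases pathPQ hsym (tX.parL' Y) with hp | hq
        · exact hp
        · exact (exclPQ hU''P (absorbQ hq (tY.parR' Ax))).elim
      rcases F1 hAY (Step.parL Y hstep) with hp | hq
      · have hYunb : ∀ n, WChain Y n := by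
          intro n
          obtain ⟨i, j, hij, hAi, hYj⟩ := wchain_par_proj (classP_unb hp (n + 2))
          have : i ≤ 1 := by
            by_contra hgt; push_neg at hgt; exact hA'2 (hAi.le (by omega))
          exact hYj.le (by omega)
        exact kill hp hA'1 hA'2 hYunb
      · exact classQ_not2 hq (by simpa using hA'1.par_add hY1)

theorem indecompP : IndecompWith BBisim (Pe a b) := by
  constructor
  · intro h
    exact classN_not1 h (wchain_P 1)
  · intro X Y h
    by_contra hc
    push_neg at hc
    exact (indecompP_aux h (wv_of_not_bbnil hc.1) (wv_of_not_bbnil hc.2)).elim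

theorem indecompQ : IndecompWith BBisim (Qe b : PExp A) := by
  constructor
  · intro h
    exact classN_not1 h wchain_Q1
  · intro X Y h
    by_contra hc
    push_neg at hc
    have h1 := wchain1_of_wv (wv_of_not_bbnil hc.1)
    have h2 := wchain1_of_wv (wv_of_not_bbnil hc.2)
    exact classQ_not2 h.symm' (by simpa using h1.par_add h2)

theorem notPQ : ¬ BBisim (Pe a b) (Qe b) :=
  fun h => classQ_not2 h (wchain_P 2)

end PExp

namespace PExp
variable {A : Type}

/-- The witness branching bisimulation relating P ∥ P and P ∥ Q. -/
def Rw (a b : A) : PExp A → PExp A → Prop := fun S T =>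
  S = T ∨
  (S = par (Pe a b) (Pe a b) ∧ T = par (Pe a b) (Qe b)) ∨
  (T = par (Pe a b) (Pe a b) ∧ S = par (Pe a b) (Qe b)) ∨
  (S = par (Qe b) (Pe a b) ∧ T = par (Pe a b) (Qe b)) ∨
  (T = par (Qe b) (Pe a b) ∧ S = par (Pe a b) (Qe b)) ∨
  (S = par nil (Pe a b) ∧ T = par (Pe a b) nil) ∨
  (T = par nil (Pe a b) ∧ S = par (Pe a b) nil) ∨
  (S = par nil (Qe b) ∧ T = par (Qe b) nil) ∨
  (T = par nil (Qe b) ∧ S = par (Qe b) nil)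

variable {a b : A}

theorem RwId {S : PExp A} : Rw a b S S := Or.inl rfl
theorem Rw2 : Rw a b (par (Pe a b) (Pe a b)) (par (Pe a b) (Qe b)) :=
  Or.inr (Or.inl ⟨rfl, rfl⟩)
theorem Rw3 : Rw a b (par (Pe a b) (Qe b)) (par (Pe a b) (Pe a b)) :=
  Or.inr (Or.inr (Or.inl ⟨rfl, rfl⟩))
theorem Rw4 : Rw a b (par (Qe b) (Pe a b)) (par (Pe a b) (Qe b)) :=
  Or.inr (Or.inr (Or.inr (Or.inl ⟨rfl, rfl⟩)))
theorem Rw5 : Rw a b (par (Pe a b) (Qe b)) (par (Qe b) (Pe a b)) :=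
  Or.inr (Or.inr (Or.inr (Or.inr (Or.inl ⟨rfl, rfl⟩))))
theorem Rw6 : Rw a b (par nil (Pe a b)) (par (Pe a b) nil) :=
  Or.inr (Or.inr (Or.inr (Or.inr (Or.inr (Or.inl ⟨rfl, rfl⟩)))))
theorem Rw7 : Rw a b (par (Pe a b) nil) (par nil (Pe a b)) :=
  Or.inr (Or.inr (Or.inr (Or.inr (Or.inr (Or.inr (Or.inl ⟨rfl, rfl⟩))))))
theorem Rw8 : Rw a b (par nil (Qe b)) (par (Qe b) nil) :=
  Or.inr (Or.inr (Or.inr (Or.inr (Or.inr (Or.inr (Or.inr (Or.inl ⟨rfl, rfl⟩)))))))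
theorem Rw9 : Rw a b (par (Qe b) nil) (par nil (Qe b)) :=
  Or.inr (Or.inr (Or.inr (Or.inr (Or.inr (Or.inr (Or.inr (Or.inr ⟨rfl, rfl⟩)))))))

theorem stPa : Step (Pe a b) (some a) (Pe a b) := Step.star _ _
theorem stQb : Step (Qe b : PExp A) (some b) nil := Step.pre _ _

theorem Rw_isBisim : IsBranchingBisim (Rw a b) := by
  constructor
  · rintro S T (rfl | ⟨rfl, rfl⟩ | ⟨rfl, rfl⟩ | ⟨rfl, rfl⟩ | ⟨rfl, rfl⟩ |
      ⟨rfl, rfl⟩ | ⟨rfl, rfl⟩ | ⟨rfl, rfl⟩ | ⟨rfl, rfl⟩)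
    · exact RwId
    · exact Rw3
    · exact Rw2
    · exact Rw5
    · exact Rw4
    · exact Rw7
    · exact Rw6
    · exact Rw9
    · exact Rw8
  · rintro S T (rfl | ⟨rfl, rfl⟩ | ⟨rfl, rfl⟩ | ⟨rfl, rfl⟩ | ⟨rfl, rfl⟩ |
      ⟨rfl, rfl⟩ | ⟨rfl, rfl⟩ | ⟨rfl, rfl⟩ | ⟨rfl, rfl⟩) α S' hs
    -- identity
    · exact ⟨S, S', .rfl, Or.inl hs, RwId, RwId⟩
    -- S = P∥P, T = P∥Q
    · cases hs with
      | parL _ h =>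
        rcases step_P_inv h with ⟨rfl, rfl⟩ | ⟨rfl, rfl⟩
        · exact ⟨_, _, .rfl, Or.inl (Step.parL _ stPa), Rw2, Rw2⟩
        · exact ⟨_, _, .rfl, Or.inr ⟨rfl, rfl⟩, Rw2, Rw4⟩
      | parR _ h =>
        rcases step_P_inv h with ⟨rfl, rfl⟩ | ⟨rfl, rfl⟩
        · exact ⟨_, _, .rfl, Or.inl (Step.parL _ stPa), Rw2, Rw2⟩
        · exact ⟨_, _, .rfl, Or.inr ⟨rfl, rfl⟩, Rw2, RwId⟩
    -- S = P∥Q, T = P∥P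
    · cases hs with
      | parL _ h =>
        rcases step_P_inv h with ⟨rfl, rfl⟩ | ⟨rfl, rfl⟩
        · exact ⟨_, _, .rfl, Or.inl (Step.parL _ stPa), Rw3, Rw3⟩
        · exact ⟨par (Pe a b) (Qe b), par (Qe b) (Qe b),
            .one (Step.parR _ step_P_tau), Or.inl (Step.parL _ step_P_tau),
            RwId, RwId⟩
      | parR _ h =>
        obtain ⟨rfl, rfl⟩ := step_Q_inv h
        exact ⟨par (Pe a b) (Qe b), par (Pe a b) nil,
          .one (Step.parR _ step_P_tau), Or.inl (Step.parR _ stQb), RwId, RwId⟩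
    -- S = Q∥P, T = P∥Q
    · cases hs with
      | parL _ h =>
        obtain ⟨rfl, rfl⟩ := step_Q_inv h
        exact ⟨_, _, .rfl, Or.inl (Step.parR _ stQb), Rw4, Rw6⟩
      | parR _ h =>
        rcases step_P_inv h with ⟨rfl, rfl⟩ | ⟨rfl, rfl⟩
        · exact ⟨_, _, .rfl, Or.inl (Step.parL _ stPa), Rw4, Rw4⟩
        · exact ⟨_, _, .rfl, Or.inl (Step.parL _ step_P_tau), Rw4, RwId⟩
    -- S = P∥Q, T = Q∥P
    · cases hs with
      | parL _ h =>
        rcases step_P_inv h with ⟨rfl, rfl⟩ | ⟨rfl, rfl⟩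
        · exact ⟨_, _, .rfl, Or.inl (Step.parR _ stPa), Rw5, Rw5⟩
        · exact ⟨_, _, .rfl, Or.inl (Step.parR _ step_P_tau), Rw5, RwId⟩
      | parR _ h =>
        obtain ⟨rfl, rfl⟩ := step_Q_inv h
        exact ⟨_, _, .rfl, Or.inl (Step.parL _ stQb), Rw5, Rw7⟩
    -- S = 0∥P, T = P∥0
    · cases hs with
      | parL _ h => exact (step_nil h).elim
      | parR _ h =>
        rcases step_P_inv h with ⟨rfl, rfl⟩ | ⟨rfl, rfl⟩
        · exact ⟨_, _, .rfl, Or.inl (Step.parL _ stPa), Rw6, Rw6⟩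
        · exact ⟨_, _, .rfl, Or.inl (Step.parL _ step_P_tau), Rw6, Rw8⟩
    -- S = P∥0, T = 0∥P
    · cases hs with
      | parL _ h =>
        rcases step_P_inv h with ⟨rfl, rfl⟩ | ⟨rfl, rfl⟩
        · exact ⟨_, _, .rfl, Or.inl (Step.parR _ stPa), Rw7, Rw7⟩
        · exact ⟨_, _, .rfl, Or.inl (Step.parR _ step_P_tau), Rw7, Rw9⟩
      | parR _ h => exact (step_nil h).elim
    -- S = 0∥Q, T = Q∥0
    · cases hs with
      | parL _ h => exact (step_nil h).elim
      | parR _ h =>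
        obtain ⟨rfl, rfl⟩ := step_Q_inv h
        exact ⟨_, _, .rfl, Or.inl (Step.parL _ stQb), Rw8, RwId⟩
    -- S = Q∥0, T = 0∥Q
    · cases hs with
      | parL _ h =>
        obtain ⟨rfl, rfl⟩ := step_Q_inv h
        exact ⟨_, _, .rfl, Or.inl (Step.parR _ stQb), Rw9, RwId⟩
      | parR _ h => exact (step_nil h).elim

theorem part1 : BBisim (par (Pe a b) (Pe a b)) (par (Pe a b) (Qe b)) :=
  ⟨Rw a b, Rw_isBisim, Rw2⟩

end PExp

/-- For P = a*(τ.b.0) and Q = b.0 (a, b ≠ τ): P ∥ P is branching bisimilar to P ∥ Q,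
although P is not branching bisimilar to Q, and both P and Q are indecomposable.
Hence decompositions of totally normed processes modulo branching bisimilarity
need not be unique. -/
theorem branching_decomposition_not_unique (A : Type) (a b : A) :
    let P : PExp A := star (some a) (pre none (pre (some b) nil))
    let Q : PExp A := pre (some b) nil
    BBisim (par P P) (par P Q) ∧ ¬ BBisim P Q ∧
      IndecompWith BBisim P ∧ IndecompWith BBisim Q := by
  intro P Q
  exact ⟨part1, notPQ, indecompP, indecompQ⟩
end

section
/- Weak norm is additive with respect to parallel composition: if P and Q are weakly normed process expressions, then P ∥ Q is weakly normed and its weak norm equals the sum of the weak norms of P and Q. Moreover, P ∥ Q is weakly normed if and only if both P and Q are weakly normed. -/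
open PExp

section Aux
variable {A : Type}

lemma step_par_inv {P Q : PExp A} {α R} (h : Step (par P Q) α R) :
    (∃ P', Step P α P' ∧ R = par P' Q) ∨ (∃ Q', Step Q α Q' ∧ R = par P Q') := by
  cases h with
  | parL _ h => exact Or.inl ⟨_, h, rfl⟩
  | parR _ h => exact Or.inr ⟨_, h, rfl⟩

lemma deadlock_par_iff {P Q : PExp A} :
    Deadlock (par P Q) ↔ Deadlock P ∧ Deadlock Q := by
  constructor
  · intro h
    exact ⟨fun α R hs => h α _ (Step.parL Q hs), fun α R hs => h α _ (Step.parR P hs)⟩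
  · rintro ⟨hP, hQ⟩ α R hs
    rcases step_par_inv hs with ⟨P', h, _⟩ | ⟨Q', h, _⟩
    · exact hP _ _ h
    · exact hQ _ _ h

lemma reaches_parL {P P' : PExp A} (Q : PExp A) (h : Reaches P P') :
    Reaches (par P Q) (par P' Q) := by
  induction h with
  | refl => exact Relation.ReflTransGen.refl
  | tail _ hs ih => exact ih.tail ⟨hs.choose, Step.parL Q hs.choose_spec⟩

lemma reaches_parR {Q Q' : PExp A} (P : PExp A) (h : Reaches Q Q') :
    Reaches (par P Q) (par P Q') := by
  induction h with
  | refl => exact Relation.ReflTransGen.refl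
  | tail _ hs ih => exact ih.tail ⟨hs.choose, Step.parR P hs.choose_spec⟩

lemma reaches_par_inv {P Q R : PExp A} (h : Reaches (par P Q) R) :
    ∃ P' Q', R = par P' Q' ∧ Reaches P P' ∧ Reaches Q Q' := by
  induction h with
  | refl => exact ⟨P, Q, rfl, Relation.ReflTransGen.refl, Relation.ReflTransGen.refl⟩
  | tail _ hs ih =>
    obtain ⟨P', Q', rfl, hP, hQ⟩ := ih
    obtain ⟨α, hs⟩ := hs
    rcases step_par_inv hs with ⟨P'', h, rfl⟩ | ⟨Q'', h, rfl⟩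
    · exact ⟨P'', Q', rfl, hP.tail ⟨α, h⟩, hQ⟩
    · exact ⟨P', Q'', rfl, hP, hQ.tail ⟨α, h⟩⟩

lemma nw_par_of_dead {P Q : PExp A} {n : ℕ} (hP : Deadlock P)
    (hQ : NormWitness Q n) : NormWitness (par P Q) n := by
  induction hQ with
  | dead h => exact NormWitness.dead (deadlock_par_iff.mpr ⟨hP, h⟩)
  | tau h _ ih => exact NormWitness.tau (Step.parR P h) ih
  | act h _ ih => exact NormWitness.act (Step.parR P h) ih

lemma nw_par {P Q : PExp A} {m n : ℕ} (hP : NormWitness P m)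
    (hQ : NormWitness Q n) : NormWitness (par P Q) (m + n) := by
  induction hP with
  | dead h => simpa using nw_par_of_dead h hQ
  | tau h _ ih => exact NormWitness.tau (Step.parL Q h) ih
  | act h _ ih =>
    have := NormWitness.act (Step.parL Q h) ih
    convert this using 1; omega

lemma nw_par_inv {R : PExp A} {j : ℕ} (h : NormWitness R j) :
    ∀ P Q, R = par P Q → ∃ m n, m + n = j ∧ NormWitness P m ∧ NormWitness Q n := by
  induction h with
  | dead h =>
    rintro P Q rfl
    obtain ⟨hP, hQ⟩ := deadlock_par_iff.mp h
    exact ⟨0, 0, rfl, NormWitness.dead hP, NormWitness.dead hQ⟩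
  | tau h _ ih =>
    rintro P Q rfl
    rcases step_par_inv h with ⟨P', hs, rfl⟩ | ⟨Q', hs, rfl⟩
    · obtain ⟨m, n, hmn, hP, hQ⟩ := ih _ _ rfl
      exact ⟨m, n, hmn, NormWitness.tau hs hP, hQ⟩
    · obtain ⟨m, n, hmn, hP, hQ⟩ := ih _ _ rfl
      exact ⟨m, n, hmn, hP, NormWitness.tau hs hQ⟩
  | act h _ ih =>
    rintro P Q rfl
    rcases step_par_inv h with ⟨P', hs, rfl⟩ | ⟨Q', hs, rfl⟩
    · obtain ⟨m, n, hmn, hP, hQ⟩ := ih _ _ rfl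
      exact ⟨m + 1, n, by omega, NormWitness.act hs hP, hQ⟩
    · obtain ⟨m, n, hmn, hP, hQ⟩ := ih _ _ rfl
      exact ⟨m, n + 1, by omega, hP, NormWitness.act hs hQ⟩

end Aux

/-- Weak norm is additive with respect to parallel composition, and P ∥ Q is weakly
normed iff both P and Q are weakly normed. -/
theorem weak_norm_additive (A : Type) (P Q : PExp A) :
    (WeaklyNormed (par P Q) ↔ WeaklyNormed P ∧ WeaklyNormed Q) ∧
    (∀ m n : ℕ, WeaklyNormed P → WeaklyNormed Q →
      IsWeakNorm P m → IsWeakNorm Q n → IsWeakNorm (par P Q) (m + n)) := by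
  constructor
  · constructor
    · rintro ⟨R, hreach, hdead⟩
      obtain ⟨P', Q', rfl, hP, hQ⟩ := reaches_par_inv hreach
      obtain ⟨hP', hQ'⟩ := deadlock_par_iff.mp hdead
      exact ⟨⟨P', hP, hP'⟩, ⟨Q', hQ, hQ'⟩⟩
    · rintro ⟨⟨P', hP, hP'⟩, ⟨Q', hQ, hQ'⟩⟩
      exact ⟨par P' Q', (reaches_parL Q hP).trans (reaches_parR P' hQ),
        deadlock_par_iff.mpr ⟨hP', hQ'⟩⟩
  · rintro m n _ _ ⟨hPw, hPmin⟩ ⟨hQw, hQmin⟩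
    refine ⟨nw_par hPw hQw, fun j hj => ?_⟩
    obtain ⟨m', n', hmn, hP, hQ⟩ := nw_par_inv hj _ _ rfl
    have := hPmin _ hP
    have := hQmin _ hQ
    omega
end

section
/- In the process calculus with only prefix iteration as source of infinite behaviour, every infinite transition sequence is eventually constant: if P₀ →α₀ P₁ →α₁ P₂ → ⋯ is an infinite sequence of transitions between process expressions, then there exists j such that Pₖ = Pₗ for all k, ℓ ≥ j. -/
open PExp

/-
Every transition either shrinks the expression syntactically or is the self-loop
`α*P →α α*P` of an iteration prefix (possibly under a parallel context, which it leaves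
unchanged). Along an infinite run the size is thus antitone, hence eventually constant, and
from then on every transition must be a self-loop.
-/

theorem exists_forall_ge_eq_of_lt_or_eq {α β : Type*} [PartialOrder β] [WellFoundedLT β]
    (f : α → β) {x : ℕ → α} (hx : ∀ i, f (x (i + 1)) < f (x i) ∨ x (i + 1) = x i) :
    ∃ n, ∀ m, n ≤ m → x n = x m := by
  have hanti : Antitone (f ∘ x) := antitone_nat_of_succ_le fun i => by
    rcases hx i with hlt | heq
    · exact hlt.le
    · simp [heq]
  obtain ⟨n, hn⟩ := WellFoundedLT.antitone_chain_condition hanti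
  refine ⟨n, fun m hm => ?_⟩
  induction m, hm using Nat.le_induction with
  | base => rfl
  | succ m hm ih =>
    rcases hx m with hlt | heq
    · have hfeq : f (x (m + 1)) = f (x m) := by rw [← ih]; exact (hn (m + 1) (by omega)).symm
      exact absurd hfeq hlt.ne
    · rw [ih, heq]

namespace PExp

theorem Step.sizeOf_lt_or_eq {A : Type} {P P' : PExp A} {α : Option A} (h : Step P α P') :
    sizeOf P' < sizeOf P ∨ P' = P := by
  induction h with
  | pre => left; simp
  | choiceL _ _ ih | choiceR _ _ ih | starStep _ _ ih =>
    left
    rcases ih with hlt | rfl <;> simp only [choice.sizeOf_spec, star.sizeOf_spec] <;> omega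
  | parL _ _ ih | parR _ _ ih =>
    rcases ih with hlt | rfl
    · left; simp only [par.sizeOf_spec]; omega
    · right; rfl
  | star => right; rfl

end PExp

/-- Every infinite transition sequence is eventually constant: infinite behaviour only
arises from the self-loops of iteration prefixes. -/
theorem infinite_sequence_eventually_constant (A : Type)
    (P : ℕ → PExp A) (α : ℕ → Option A)
    (h : ∀ i, Step (P i) (α i) (P (i + 1))) :
    ∃ j, ∀ k l, j ≤ k → j ≤ l → P k = P l := by
  obtain ⟨j, hj⟩ := exists_forall_ge_eq_of_lt_or_eq sizeOf fun i => (h i).sizeOf_lt_or_eq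
  exact ⟨j, fun k l hk hl => (hj k hk).symm.trans (hj l hl)⟩
end

section
/- Branching bisimilarity is compatible with parallel composition: if P₁ is branching bisimilar to Q₁ and P₂ is branching bisimilar to Q₂, then P₁ ∥ P₂ is branching bisimilar to Q₁ ∥ Q₂. Consequently, process expressions modulo branching bisimilarity form a commutative monoid under ∥ with [0] as identity. -/
open PExp


section Aux
variable {A : Type}

lemma strong_to_branching {R : PExp A → PExp A → Prop}
    (hs : Symmetric R)
    (h : ∀ P Q, R P Q → ∀ α P', Step P α P' → ∃ Q', Step Q α Q' ∧ R P' Q') :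
    IsBranchingBisim R := by
  refine ⟨hs, fun P Q hPQ α P' hstep => ?_⟩
  obtain ⟨Q', hQ, hR⟩ := h P Q hPQ α P' hstep
  exact ⟨Q, Q', Relation.ReflTransGen.refl, Or.inl hQ, hPQ, hR⟩

lemma bbisim_symm {P Q : PExp A} : BBisim P Q → BBisim Q P :=
  fun ⟨R, hR, hpq⟩ => ⟨R, hR, hR.1 hpq⟩

lemma bbisim_step {P Q P' : PExp A} {α : Option A} (h : BBisim P Q) (hs : Step P α P') :
    ∃ Q'' Q', TauSteps Q Q'' ∧ OptStep Q'' α Q' ∧ BBisim P Q'' ∧ BBisim P' Q' := by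
  obtain ⟨R, hR, hpq⟩ := h
  obtain ⟨Q'', Q', h1, h2, h3, h4⟩ := hR.2 P Q hpq α P' hs
  exact ⟨Q'', Q', h1, h2, ⟨R, hR, h3⟩, ⟨R, hR, h4⟩⟩

lemma tauSteps_parL {P P' : PExp A} (Q : PExp A) (h : TauSteps P P') :
    TauSteps (par P Q) (par P' Q) := by
  induction h with
  | refl => exact Relation.ReflTransGen.refl
  | tail _ hstep ih => exact ih.tail (Step.parL Q hstep)

lemma tauSteps_parR {Q Q' : PExp A} (P : PExp A) (h : TauSteps Q Q') :
    TauSteps (par P Q) (par P Q') := by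
  induction h with
  | refl => exact Relation.ReflTransGen.refl
  | tail _ hstep ih => exact ih.tail (Step.parR P hstep)

lemma bbisim_par_cong {P₁ P₂ Q₁ Q₂ : PExp A} (h1 : BBisim P₁ Q₁) (h2 : BBisim P₂ Q₂) :
    BBisim (par P₁ P₂) (par Q₁ Q₂) := by
  refine ⟨fun X Y => ∃ a b c d, X = par a b ∧ Y = par c d ∧ BBisim a c ∧ BBisim b d,
    ⟨?_, ?_⟩, P₁, P₂, Q₁, Q₂, rfl, rfl, h1, h2⟩
  · rintro X Y ⟨a, b, c, d, rfl, rfl, hac, hbd⟩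
    exact ⟨c, d, a, b, rfl, rfl, bbisim_symm hac, bbisim_symm hbd⟩
  · rintro X Y ⟨a, b, c, d, rfl, rfl, hac, hbd⟩ α P' hstep
    cases hstep with
    | parL _ hs =>
      obtain ⟨c'', c', t1, t2, t3, t4⟩ := bbisim_step hac hs
      refine ⟨par c'' d, par c' d, tauSteps_parL d t1, ?_,
        ⟨a, b, c'', d, rfl, rfl, t3, hbd⟩, ⟨_, b, c', d, rfl, rfl, t4, hbd⟩⟩
      rcases t2 with hst | ⟨rfl, rfl⟩
      · exact Or.inl (Step.parL d hst)
      · exact Or.inr ⟨rfl, rfl⟩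
    | parR _ hs =>
      obtain ⟨d'', d', t1, t2, t3, t4⟩ := bbisim_step hbd hs
      refine ⟨par c d'', par c d', tauSteps_parR c t1, ?_,
        ⟨a, b, c, d'', rfl, rfl, hac, t3⟩, ⟨a, _, c, d', rfl, rfl, hac, t4⟩⟩
      rcases t2 with hst | ⟨rfl, rfl⟩
      · exact Or.inl (Step.parR c hst)
      · exact Or.inr ⟨rfl, rfl⟩

lemma bbisim_par_comm (P Q : PExp A) : BBisim (par P Q) (par Q P) := by
  refine ⟨fun X Y => ∃ a b, X = par a b ∧ Y = par b a,
    strong_to_branching ?_ ?_, P, Q, rfl, rfl⟩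
  · rintro X Y ⟨a, b, rfl, rfl⟩; exact ⟨b, a, rfl, rfl⟩
  · rintro X Y ⟨a, b, rfl, rfl⟩ α P' hstep
    cases hstep with
    | parL _ hs => exact ⟨_, Step.parR b hs, _, b, rfl, rfl⟩
    | parR _ hs => exact ⟨_, Step.parL a hs, a, _, rfl, rfl⟩

lemma bbisim_par_assoc (P Q R : PExp A) : BBisim (par (par P Q) R) (par P (par Q R)) := by
  refine ⟨fun X Y => (∃ a b c, X = par (par a b) c ∧ Y = par a (par b c)) ∨
      (∃ a b c, Y = par (par a b) c ∧ X = par a (par b c)),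
    strong_to_branching ?_ ?_, Or.inl ⟨P, Q, R, rfl, rfl⟩⟩
  · rintro X Y (⟨a, b, c, rfl, rfl⟩ | ⟨a, b, c, rfl, rfl⟩)
    · exact Or.inr ⟨a, b, c, rfl, rfl⟩
    · exact Or.inl ⟨a, b, c, rfl, rfl⟩
  · rintro X Y (⟨a, b, c, rfl, rfl⟩ | ⟨a, b, c, rfl, rfl⟩) α P' hstep
    · cases hstep with
      | parL _ hs =>
        cases hs with
        | parL _ hs' => exact ⟨_, Step.parL _ hs', Or.inl ⟨_, b, c, rfl, rfl⟩⟩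
        | parR _ hs' => exact ⟨_, Step.parR _ (Step.parL _ hs'), Or.inl ⟨a, _, c, rfl, rfl⟩⟩
      | parR _ hs => exact ⟨_, Step.parR _ (Step.parR _ hs), Or.inl ⟨a, b, _, rfl, rfl⟩⟩
    · cases hstep with
      | parL _ hs => exact ⟨_, Step.parL _ (Step.parL _ hs), Or.inr ⟨_, b, c, rfl, rfl⟩⟩
      | parR _ hs =>
        cases hs with
        | parL _ hs' => exact ⟨_, Step.parL _ (Step.parR _ hs'), Or.inr ⟨a, _, c, rfl, rfl⟩⟩
        | parR _ hs' => exact ⟨_, Step.parR _ hs', Or.inr ⟨a, b, _, rfl, rfl⟩⟩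

lemma bbisim_par_nil (P : PExp A) : BBisim (par P nil) P := by
  refine ⟨fun X Y => X = par Y nil ∨ Y = par X nil,
    strong_to_branching ?_ ?_, Or.inl rfl⟩
  · rintro X Y (rfl | rfl)
    · exact Or.inr rfl
    · exact Or.inl rfl
  · rintro X Y (rfl | rfl) α P' hstep
    · cases hstep with
      | parL _ hs => exact ⟨_, hs, Or.inl rfl⟩
      | parR _ hs => cases hs
    · exact ⟨_, Step.parL _ hstep, Or.inr rfl⟩

lemma bbisim_nil_par (P : PExp A) : BBisim (par nil P) P := by
  refine ⟨fun X Y => X = par nil Y ∨ Y = par nil X,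
    strong_to_branching ?_ ?_, Or.inl rfl⟩
  · rintro X Y (rfl | rfl)
    · exact Or.inr rfl
    · exact Or.inl rfl
  · rintro X Y (rfl | rfl) α P' hstep
    · cases hstep with
      | parL _ hs => cases hs
      | parR _ hs => exact ⟨_, hs, Or.inl rfl⟩
    · exact ⟨_, Step.parR _ hstep, Or.inr rfl⟩

end Aux

/-- Branching bisimilarity is compatible with parallel composition, and process
expressions modulo branching bisimilarity form a commutative monoid under ∥ with
[0] as identity. -/
theorem bbisim_par_commutative_monoid (A : Type) :
    (∀ P₁ P₂ Q₁ Q₂ : PExp A,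
      BBisim P₁ Q₁ → BBisim P₂ Q₂ → BBisim (par P₁ P₂) (par Q₁ Q₂)) ∧
    (∀ P Q : PExp A, BBisim (par P Q) (par Q P)) ∧
    (∀ P Q R : PExp A, BBisim (par (par P Q) R) (par P (par Q R))) ∧
    (∀ P : PExp A, BBisim (par P nil) P) ∧
    (∀ P : PExp A, BBisim (par nil P) P) := by
  exact ⟨fun P₁ P₂ Q₁ Q₂ h1 h2 => bbisim_par_cong h1 h2, bbisim_par_comm,
    bbisim_par_assoc, bbisim_par_nil, bbisim_nil_par⟩
end
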